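/- arXiv:2509.15764 — 7 statements merged into one kernel-verified Lean document; each statement's English description precedes it below -/
import Mathlib

section
/- Let G be a bipartite graph and assign to each edge e = uw the value f(e) = max{deg(u), deg(w)}. If each edge e is given a list L(e) of at least f(e) colors, then G has a proper edge coloring in which each edge receives a color from its own list. -/
open SimpleGraph
open Finset


/-- Two edges (as unordered pairs) share an endpoint. -/
def EdgesAdj {V : Type*} (e f : Sym2 V) : Prop := ∃ v, v ∈ e ∧ v ∈ f

/-- A (total) proper edge coloring: distinct edges of `G` sharing a vertex get distinct colors. -/
def IsProperEdgeColoring {V α : Type*} (G : SimpleGraph V) (C : Sym2 V → α) : Prop :=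
  ∀ e ∈ G.edgeSet, ∀ f ∈ G.edgeSet, e ≠ f → EdgesAdj e f → C e ≠ C f

/-- Two edges are at distance at least 2: no shared endpoint and no edge of `G`
joining an endpoint of one to an endpoint of the other. -/
def Dist2Apart {V : Type*} (G : SimpleGraph V) (e f : Sym2 V) : Prop :=
  ∀ x ∈ e, ∀ y ∈ f, x ≠ y ∧ ¬ G.Adj x y

/-- A distance-2 (induced) matching. -/
def IsInducedMatching {V : Type*} (G : SimpleGraph V) (M : Set (Sym2 V)) : Prop :=
  M ⊆ G.edgeSet ∧ ∀ e ∈ M, ∀ f ∈ M, e ≠ f → Dist2Apart G e f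

/-- The `m`-dimensional hypercube `Q_m`: vertices are 0/1 vectors of length `m`,
adjacent iff they differ in exactly one coordinate. -/
def hypercube (m : ℕ) : SimpleGraph (Fin m → Bool) :=
  SimpleGraph.fromRel (fun x y => (Finset.univ.filter (fun i => x i ≠ y i)).card = 1)

/-- Proper edge coloring given on the edge set only. -/
def IsProperEdgeColoring' {V α : Type*} (G : SimpleGraph V) (C : G.edgeSet → α) : Prop :=
  ∀ e f : G.edgeSet, e ≠ f → EdgesAdj (e : Sym2 V) (f : Sym2 V) → C e ≠ C f

/-- The chromatic index: least number of colors admitting a proper edge coloring. -/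
noncomputable def chromIndex {V : Type*} (G : SimpleGraph V) : ℕ :=
  sInf {n | ∃ C : G.edgeSet → Fin n, IsProperEdgeColoring' G C}

namespace BKW

variable {V : Type*} [DecidableEq V]

/-- Number of edges with first coordinate `u`. -/
def dX (E : Finset (V × V)) (u : V) : ℕ := #(E.filter fun f => f.1 = u)
/-- Number of edges with second coordinate `w`. -/
def dY (E : Finset (V × V)) (w : V) : ℕ := #(E.filter fun f => f.2 = w)

/-- A matching of pairs: distinct pairs differ in both coordinates. -/
def IsPM (M : Finset (V × V)) : Prop :=
  ∀ e ∈ M, ∀ f ∈ M, e ≠ f → e.1 ≠ f.1 ∧ e.2 ≠ f.2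

def NbX (H : Finset (V × V)) (A : Finset V) : Finset V :=
  (H.filter fun e => e.2 ∈ A).image Prod.fst
def NbY (H : Finset (V × V)) (B : Finset V) : Finset V :=
  (H.filter fun e => e.1 ∈ B).image Prod.snd

lemma NbX_mono (H : Finset (V × V)) {A A' : Finset V} (h : A ⊆ A') :
    NbX H A ⊆ NbX H A' := by
  apply image_subset_image
  intro e he
  simp only [mem_filter] at he ⊢
  exact ⟨he.1, h he.2⟩


/-- If some nonempty `A` inside the second-coordinates of `H` has `|N(A)| ≤ |A|`,
then there is a nonempty matching `M ⊆ H` such that every edge of `H` whose second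
coordinate is covered has its first coordinate covered. -/
lemma exists_tight_left (H : Finset (V × V)) (A0 : Finset V) (hA0ne : A0.Nonempty)
    (hA0sub : A0 ⊆ H.image Prod.snd) (hA0card : #(NbX H A0) ≤ #A0) :
    ∃ M ⊆ H, M.Nonempty ∧ IsPM M ∧
      (∀ e ∈ H, e.2 ∈ M.image Prod.snd → e.1 ∈ M.image Prod.fst) := by
  classical
  -- collection of candidate sets
  set S : Finset (Finset V) :=
    ((H.image Prod.snd).powerset).filter
      (fun A => A.Nonempty ∧ #(NbX H A) ≤ #A) with hS
  have hA0S : A0 ∈ S := by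
    simp only [hS, mem_filter, mem_powerset]
    exact ⟨hA0sub, hA0ne, hA0card⟩
  obtain ⟨A, hAS, hAmin⟩ := S.exists_min_image card ⟨A0, hA0S⟩
  simp only [hS, mem_filter, mem_powerset] at hAS
  obtain ⟨hAsub, hAne, hAcard⟩ := hAS
  -- every nonisolated vertex of A has a neighbor
  have hnbr : ∀ a ∈ A, ∃ e ∈ H, e.2 = a := by
    intro a ha
    have := hAsub ha
    simp only [mem_image] at this
    obtain ⟨e, he, he2⟩ := this
    exact ⟨e, he, he2⟩
  -- strict expansion of proper nonempty subsets
  have hstrict : ∀ A' ⊆ A, A'.Nonempty → A' ≠ A → #A' < #(NbX H A') := by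
    intro A' hsub hne hneq
    by_contra hcon
    push_neg at hcon
    have hA'S : A' ∈ S := by
      simp only [hS, mem_filter, mem_powerset]
      exact ⟨hsub.trans hAsub, hne, hcon⟩
    have h1 := hAmin A' hA'S
    have h2 : #A' < #A := card_lt_card (Finset.ssubset_iff_subset_ne.2 ⟨hsub, hneq⟩)
    omega
  -- |N(A)| = |A|
  have hEq : #(NbX H A) = #A := by
    rcases eq_or_lt_of_le (Nat.one_le_iff_ne_zero.2 (by
      simpa [card_eq_zero] using hAne.ne_empty) : 1 ≤ #A) with h1 | h1
    · -- #A = 1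
      obtain ⟨a, ha⟩ := card_eq_one.1 h1.symm
      subst ha
      obtain ⟨e, he, he2⟩ := hnbr a (mem_singleton_self a)
      have : e.1 ∈ NbX H {a} := by
        simp only [NbX, mem_image, mem_filter]
        exact ⟨e, ⟨he, by simp [he2]⟩, rfl⟩
      have h2 : 1 ≤ #(NbX H {a}) := card_pos.2 ⟨e.1, this⟩
      simp only [card_singleton]
      omega
    · -- #A ≥ 2
      obtain ⟨a, ha⟩ := hAne
      have hprop : A.erase a ≠ A := by
        intro h
        have := h ▸ notMem_erase a A
        exact this ha
      have hne' : (A.erase a).Nonempty := by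
        rw [← card_pos, card_erase_of_mem ha]; omega
      have h3 := hstrict (A.erase a) (erase_subset a A) hne' hprop
      have h4 : #(NbX H (A.erase a)) ≤ #(NbX H A) :=
        card_le_card (NbX_mono H (erase_subset a A))
      have h5 : #(A.erase a) = #A - 1 := card_erase_of_mem ha
      omega
  -- Hall condition via mathlib
  have hall : ∀ s : Finset {x // x ∈ A},
      s.card ≤ #(s.biUnion fun a => NbX H {a.1}) := by
    intro s
    rcases s.eq_empty_or_nonempty with rfl | hsne
    · simp
    · set A' : Finset V := s.image (fun a => a.1) with hA'
      have hA'sub : A' ⊆ A := by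
        intro x hx
        simp only [hA', mem_image] at hx
        obtain ⟨a, _, rfl⟩ := hx
        exact a.2
      have hA'card : #A' = #s := card_image_of_injective s Subtype.val_injective
      have hbiu : s.biUnion (fun a => NbX H {a.1}) = NbX H A' := by
        ext u
        simp only [mem_biUnion, NbX, mem_image, mem_filter, mem_singleton, hA']
        constructor
        · rintro ⟨a, has, e, ⟨heH, he2⟩, rfl⟩
          exact ⟨e, ⟨heH, ⟨a, has, he2.symm⟩⟩, rfl⟩
        · rintro ⟨e, ⟨heH, ⟨a, has, he2⟩⟩, rfl⟩
          exact ⟨a, has, e, ⟨heH, he2.symm⟩, rfl⟩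
      rw [hbiu]
      rcases eq_or_ne A' A with h | h
      · rw [h, hEq, ← hA'card, h]
      · have hA'ne : A'.Nonempty := hsne.image _
        have := hstrict A' hA'sub hA'ne h
        omega
  obtain ⟨f, hfinj, hfmem⟩ :=
    (Finset.all_card_le_biUnion_card_iff_exists_injective
      (fun a : {x // x ∈ A} => NbX H {a.1})).1 hall
  -- the matching
  set M : Finset (V × V) := A.attach.image (fun a => (f a, a.1)) with hM
  have hMedge : ∀ a : {x // x ∈ A}, (f a, a.1) ∈ H := by
    intro a
    have := hfmem a
    simp only [NbX, mem_image, mem_filter, mem_singleton] at this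
    obtain ⟨e, ⟨heH, he2⟩, he1⟩ := this
    have : e = (f a, a.1) := by
      ext <;> simp [he1, he2]
    exact this ▸ heH
  refine ⟨M, ?_, ?_, ?_, ?_⟩
  · intro e he
    simp only [hM, mem_image, mem_attach, true_and] at he
    obtain ⟨a, rfl⟩ := he
    exact hMedge a
  · obtain ⟨a, ha⟩ := hAne
    refine ⟨(f ⟨a, ha⟩, a), ?_⟩
    simp only [hM, mem_image, mem_attach, true_and]
    exact ⟨⟨a, ha⟩, rfl⟩
  · intro e he g hg hne
    simp only [hM, mem_image, mem_attach, true_and] at he hg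
    obtain ⟨a, rfl⟩ := he
    obtain ⟨b, rfl⟩ := hg
    have hab : a ≠ b := by rintro rfl; exact hne rfl
    constructor
    · simp only [ne_eq]
      intro h
      exact hab (hfinj h)
    · simp only [ne_eq]
      intro h
      exact hab (Subtype.ext h)
  · -- closure
    intro e heH he2
    -- covered second coordinates are exactly A
    have hsnd : M.image Prod.snd = A := by
      ext x
      simp only [hM, image_image, mem_image, mem_attach, true_and, Function.comp]
      constructor
      · rintro ⟨a, rfl⟩; exact a.2
      · intro hx; exact ⟨⟨x, hx⟩, rfl⟩
    have hfst_sub : M.image Prod.fst ⊆ NbX H A := by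
      intro x hx
      simp only [hM, image_image, mem_image, mem_attach, true_and, Function.comp] at hx
      obtain ⟨a, rfl⟩ := hx
      exact NbX_mono H (by simp [a.2]) (hfmem a)
    have hcardM : #(M.image Prod.fst) = #A := by
      have h1 : #(M.image Prod.fst) = #A.attach := by
        rw [hM, image_image]
        apply card_image_of_injective
        intro a b hab
        exact hfinj hab
      simp [h1]
    have hfst : M.image Prod.fst = NbX H A :=
      eq_of_subset_of_card_le hfst_sub (by omega)
    rw [hsnd] at he2
    rw [hfst]
    simp only [NbX, mem_image, mem_filter]
    exact ⟨e, ⟨heH, he2⟩, rfl⟩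


lemma NbY_mono (H : Finset (V × V)) {A A' : Finset V} (h : A ⊆ A') :
    NbY H A ⊆ NbY H A' := by
  apply image_subset_image
  intro e he
  simp only [mem_filter] at he ⊢
  exact ⟨he.1, h he.2⟩

/-- If some nonempty `A` inside the second-coordinates of `H` has `|N(A)| ≤ |A|`,
then there is a nonempty matching `M ⊆ H` such that every edge of `H` whose second
coordinate is covered has its first coordinate covered. -/
lemma exists_tight_right (H : Finset (V × V)) (A0 : Finset V) (hA0ne : A0.Nonempty)
    (hA0sub : A0 ⊆ H.image Prod.fst) (hA0card : #(NbY H A0) ≤ #A0) :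
    ∃ M ⊆ H, M.Nonempty ∧ IsPM M ∧
      (∀ e ∈ H, e.1 ∈ M.image Prod.fst → e.2 ∈ M.image Prod.snd) := by
  classical
  -- collection of candidate sets
  set S : Finset (Finset V) :=
    ((H.image Prod.fst).powerset).filter
      (fun A => A.Nonempty ∧ #(NbY H A) ≤ #A) with hS
  have hA0S : A0 ∈ S := by
    simp only [hS, mem_filter, mem_powerset]
    exact ⟨hA0sub, hA0ne, hA0card⟩
  obtain ⟨A, hAS, hAmin⟩ := S.exists_min_image card ⟨A0, hA0S⟩
  simp only [hS, mem_filter, mem_powerset] at hAS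
  obtain ⟨hAsub, hAne, hAcard⟩ := hAS
  -- every nonisolated vertex of A has a neighbor
  have hnbr : ∀ a ∈ A, ∃ e ∈ H, e.1 = a := by
    intro a ha
    have := hAsub ha
    simp only [mem_image] at this
    obtain ⟨e, he, he1⟩ := this
    exact ⟨e, he, he1⟩
  -- strict expansion of proper nonempty subsets
  have hstrict : ∀ A' ⊆ A, A'.Nonempty → A' ≠ A → #A' < #(NbY H A') := by
    intro A' hsub hne hneq
    by_contra hcon
    push_neg at hcon
    have hA'S : A' ∈ S := by
      simp only [hS, mem_filter, mem_powerset]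
      exact ⟨hsub.trans hAsub, hne, hcon⟩
    have h1 := hAmin A' hA'S
    have h2 : #A' < #A := card_lt_card (Finset.ssubset_iff_subset_ne.2 ⟨hsub, hneq⟩)
    omega
  -- |N(A)| = |A|
  have hEq : #(NbY H A) = #A := by
    rcases eq_or_lt_of_le (Nat.one_le_iff_ne_zero.2 (by
      simpa [card_eq_zero] using hAne.ne_empty) : 1 ≤ #A) with h1 | h1
    · -- #A = 1
      obtain ⟨a, ha⟩ := card_eq_one.1 h1.symm
      subst ha
      obtain ⟨e, he, he1⟩ := hnbr a (mem_singleton_self a)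
      have : e.2 ∈ NbY H {a} := by
        simp only [NbY, mem_image, mem_filter]
        exact ⟨e, ⟨he, by simp [he1]⟩, rfl⟩
      have h2 : 1 ≤ #(NbY H {a}) := card_pos.2 ⟨e.2, this⟩
      simp only [card_singleton]
      omega
    · -- #A ≥ 2
      obtain ⟨a, ha⟩ := hAne
      have hprop : A.erase a ≠ A := by
        intro h
        have := h ▸ notMem_erase a A
        exact this ha
      have hne' : (A.erase a).Nonempty := by
        rw [← card_pos, card_erase_of_mem ha]; omega
      have h3 := hstrict (A.erase a) (erase_subset a A) hne' hprop
      have h4 : #(NbY H (A.erase a)) ≤ #(NbY H A) :=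
        card_le_card (NbY_mono H (erase_subset a A))
      have h5 : #(A.erase a) = #A - 1 := card_erase_of_mem ha
      omega
  -- Hall condition via mathlib
  have hall : ∀ s : Finset {x // x ∈ A},
      s.card ≤ #(s.biUnion fun a => NbY H {a.1}) := by
    intro s
    rcases s.eq_empty_or_nonempty with rfl | hsne
    · simp
    · set A' : Finset V := s.image (fun a => a.1) with hA'
      have hA'sub : A' ⊆ A := by
        intro x hx
        simp only [hA', mem_image] at hx
        obtain ⟨a, _, rfl⟩ := hx
        exact a.2
      have hA'card : #A' = #s := card_image_of_injective s Subtype.val_injective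
      have hbiu : s.biUnion (fun a => NbY H {a.1}) = NbY H A' := by
        ext u
        simp only [mem_biUnion, NbY, mem_image, mem_filter, mem_singleton, hA']
        constructor
        · rintro ⟨a, has, e, ⟨heH, he1⟩, rfl⟩
          exact ⟨e, ⟨heH, ⟨a, has, he1.symm⟩⟩, rfl⟩
        · rintro ⟨e, ⟨heH, ⟨a, has, he1⟩⟩, rfl⟩
          exact ⟨a, has, e, ⟨heH, he1.symm⟩, rfl⟩
      rw [hbiu]
      rcases eq_or_ne A' A with h | h
      · rw [h, hEq, ← hA'card, h]
      · have hA'ne : A'.Nonempty := hsne.image _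
        have := hstrict A' hA'sub hA'ne h
        omega
  obtain ⟨f, hfinj, hfmem⟩ :=
    (Finset.all_card_le_biUnion_card_iff_exists_injective
      (fun a : {x // x ∈ A} => NbY H {a.1})).1 hall
  -- the matching
  set M : Finset (V × V) := A.attach.image (fun a => (a.1, f a)) with hM
  have hMedge : ∀ a : {x // x ∈ A}, (a.1, f a) ∈ H := by
    intro a
    have := hfmem a
    simp only [NbY, mem_image, mem_filter, mem_singleton] at this
    obtain ⟨e, ⟨heH, he1⟩, he2⟩ := this
    have : e = (a.1, f a) := by
      ext <;> simp [he2, he1]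
    exact this ▸ heH
  refine ⟨M, ?_, ?_, ?_, ?_⟩
  · intro e he
    simp only [hM, mem_image, mem_attach, true_and] at he
    obtain ⟨a, rfl⟩ := he
    exact hMedge a
  · obtain ⟨a, ha⟩ := hAne
    refine ⟨(a, f ⟨a, ha⟩), ?_⟩
    simp only [hM, mem_image, mem_attach, true_and]
    exact ⟨⟨a, ha⟩, rfl⟩
  · intro e he g hg hne
    simp only [hM, mem_image, mem_attach, true_and] at he hg
    obtain ⟨a, rfl⟩ := he
    obtain ⟨b, rfl⟩ := hg
    have hab : a ≠ b := by rintro rfl; exact hne rfl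
    constructor
    · simp only [ne_eq]
      intro h
      exact hab (Subtype.ext h)
    · simp only [ne_eq]
      intro h
      exact hab (hfinj h)
  · -- closure
    intro e heH he1
    -- covered second coordinates are exactly A
    have hsnd : M.image Prod.fst = A := by
      ext x
      simp only [hM, image_image, mem_image, mem_attach, true_and, Function.comp]
      constructor
      · rintro ⟨a, rfl⟩; exact a.2
      · intro hx; exact ⟨⟨x, hx⟩, rfl⟩
    have hfst_sub : M.image Prod.snd ⊆ NbY H A := by
      intro x hx
      simp only [hM, image_image, mem_image, mem_attach, true_and, Function.comp] at hx
      obtain ⟨a, rfl⟩ := hx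
      exact NbY_mono H (by simp [a.2]) (hfmem a)
    have hcardM : #(M.image Prod.snd) = #A := by
      have h1 : #(M.image Prod.snd) = #A.attach := by
        rw [hM, image_image]
        apply card_image_of_injective
        intro a b hab
        exact hfinj hab
      simp [h1]
    have hfst : M.image Prod.snd = NbY H A :=
      eq_of_subset_of_card_le hfst_sub (by omega)
    rw [hsnd] at he1
    rw [hfst]
    simp only [NbY, mem_image, mem_filter]
    exact ⟨e, ⟨heH, he1⟩, rfl⟩



/-- Standard safety: every edge whose second endpoint is covered and whose first endpoint
has at least the degree of the second has its first endpoint covered. -/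
def StdSafe (E M : Finset (V × V)) : Prop :=
  ∀ e ∈ E, e.2 ∈ M.image Prod.snd → dY E e.2 ≤ dX E e.1 → e.1 ∈ M.image Prod.fst

/-- Mirrored safety. -/
def MirSafe (E M : Finset (V × V)) : Prop :=
  ∀ e ∈ E, e.1 ∈ M.image Prod.fst → dX E e.1 ≤ dY E e.2 → e.2 ∈ M.image Prod.snd

lemma exists_safe (E : Finset (V × V)) (hE : E.Nonempty) :
    ∃ M ⊆ E, M.Nonempty ∧ IsPM M ∧ (StdSafe E M ∨ MirSafe E M) := by
  classical
  set D : ℕ := E.sup (fun e => max (dX E e.1) (dY E e.2)) with hD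
  have hsup : ∀ e ∈ E, max (dX E e.1) (dY E e.2) ≤ D :=
    fun e he => Finset.le_sup (f := fun e => max (dX E e.1) (dY E e.2)) he
  have hdx : ∀ e ∈ E, dX E e.1 ≤ D := fun e he =>
    le_trans (le_max_left _ _) (hsup e he)
  have hdy : ∀ e ∈ E, dY E e.2 ≤ D := fun e he =>
    le_trans (le_max_right _ _) (hsup e he)
  set H : Finset (V × V) := E.filter (fun e => dX E e.1 = D ∧ dY E e.2 = D) with hH
  rcases H.eq_empty_or_nonempty with hHe | hHne
  · -- no edge between two maximum-degree endpoints: a single extremal edge works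
    obtain ⟨e₀, he₀, he₀eq⟩ := Finset.exists_mem_eq_sup E hE
      (fun e => max (dX E e.1) (dY E e.2))
    rcases max_cases (dX E e₀.1) (dY E e₀.2) with ⟨hmx, _⟩ | ⟨hmx, _⟩
    · -- dX e₀.1 = D : mirrored single edge
      refine ⟨{e₀}, by simp [he₀], singleton_nonempty e₀, ?_, Or.inr ?_⟩
      · intro e he f hf hne
        simp only [mem_singleton] at he hf
        exact absurd (he.trans hf.symm) hne
      · intro e he he1 hle
        simp only [image_singleton, mem_singleton] at he1 ⊢
        have hdxe : dX E e.1 = D := by rw [he1, ← hmx, hD, he₀eq]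
        have hdye : dY E e.2 = D := le_antisymm (hdy e he) (hdxe ▸ hle)
        have : e ∈ H := by simp [hH, mem_filter, he, hdxe, hdye]
        rw [hHe] at this
        exact absurd this (notMem_empty e)
    · -- dY e₀.2 = D : standard single edge
      refine ⟨{e₀}, by simp [he₀], singleton_nonempty e₀, ?_, Or.inl ?_⟩
      · intro e he f hf hne
        simp only [mem_singleton] at he hf
        exact absurd (he.trans hf.symm) hne
      · intro e he he2 hle
        simp only [image_singleton, mem_singleton] at he2 ⊢
        have hdye : dY E e.2 = D := by rw [he2, ← hmx, hD, he₀eq]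
        have hdxe : dX E e.1 = D := le_antisymm (hdx e he) (hdye ▸ hle)
        have : e ∈ H := by simp [hH, mem_filter, he, hdxe, hdye]
        rw [hHe] at this
        exact absurd this (notMem_empty e)
  · -- H nonempty : tight matching inside H
    have hHsub : H ⊆ E := filter_subset _ _
    have hXY : NbX H (H.image Prod.snd) = H.image Prod.fst := by
      ext u
      simp only [NbX, mem_image, mem_filter]
      constructor
      · rintro ⟨e, ⟨heH, _⟩, rfl⟩; exact ⟨e, heH, rfl⟩
      · rintro ⟨e, heH, rfl⟩; exact ⟨e, ⟨heH, ⟨e, heH, rfl⟩⟩, rfl⟩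
    have hYX : NbY H (H.image Prod.fst) = H.image Prod.snd := by
      ext u
      simp only [NbY, mem_image, mem_filter]
      constructor
      · rintro ⟨e, ⟨heH, _⟩, rfl⟩; exact ⟨e, heH, rfl⟩
      · rintro ⟨e, heH, rfl⟩; exact ⟨e, ⟨heH, ⟨e, heH, rfl⟩⟩, rfl⟩
    have hmemH : ∀ e ∈ H, dX E e.1 = D ∧ dY E e.2 = D := by
      intro e he
      simp only [hH, mem_filter] at he
      exact he.2
    by_cases hcase : #(NbX H (H.image Prod.snd)) ≤ #(H.image Prod.snd)
    · obtain ⟨M, hMsub, hMne, hMpm, hMcl⟩ := exists_tight_left H (H.image Prod.snd)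
        (hHne.image _) (Finset.Subset.refl _) hcase
      refine ⟨M, hMsub.trans hHsub, hMne, hMpm, Or.inl ?_⟩
      intro e he he2 hle
      obtain ⟨m, hm, hm2⟩ : ∃ m ∈ M, m.2 = e.2 := by
        simpa only [mem_image] using he2
      have hmH := hMsub hm
      have hdye : dY E e.2 = D := hm2 ▸ (hmemH m hmH).2
      have hdxe : dX E e.1 = D := le_antisymm (hdx e he) (hdye ▸ hle)
      have heHmem : e ∈ H := by simp [hH, mem_filter, he, hdxe, hdye]
      exact hMcl e heHmem (by simpa only [mem_image] using ⟨m, hm, hm2⟩)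
    · push_neg at hcase
      rw [hXY] at hcase
      have hcase' : #(NbY H (H.image Prod.fst)) ≤ #(H.image Prod.fst) := by
        rw [hYX]; omega
      obtain ⟨M, hMsub, hMne, hMpm, hMcl⟩ := exists_tight_right H (H.image Prod.fst)
        (hHne.image _) (Finset.Subset.refl _) hcase'
      refine ⟨M, hMsub.trans hHsub, hMne, hMpm, Or.inr ?_⟩
      intro e he he1 hle
      obtain ⟨m, hm, hm1⟩ : ∃ m ∈ M, m.1 = e.1 := by
        simpa only [mem_image] using he1
      have hmH := hMsub hm
      have hdxe : dX E e.1 = D := hm1 ▸ (hmemH m hmH).1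
      have hdye : dY E e.2 = D := le_antisymm (hdy e he) (hdxe ▸ hle)
      have heHmem : e ∈ H := by simp [hH, mem_filter, he, hdxe, hdye]
      exact hMcl e heHmem (by simpa only [mem_image] using ⟨m, hm, hm1⟩)


lemma pm_filter_fst_le_one {M : Finset (V × V)} (hM : IsPM M) (u : V) :
    #(M.filter fun f => f.1 = u) ≤ 1 := by
  rw [card_le_one]
  intro a ha b hb
  simp only [mem_filter] at ha hb
  by_contra hne
  exact (hM a ha.1 b hb.1 hne).1 (ha.2.trans hb.2.symm)

lemma pm_filter_snd_le_one {M : Finset (V × V)} (hM : IsPM M) (w : V) :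
    #(M.filter fun f => f.2 = w) ≤ 1 := by
  rw [card_le_one]
  intro a ha b hb
  simp only [mem_filter] at ha hb
  by_contra hne
  exact (hM a ha.1 b hb.1 hne).2 (ha.2.trans hb.2.symm)

lemma card_filter_split {E M : Finset (V × V)} (hM : M ⊆ E) (p : V × V → Prop)
    [DecidablePred p] :
    #(E.filter p) = #((E \ M).filter p) + #(M.filter p) := by
  rw [← card_union_of_disjoint, ← filter_union, sdiff_union_of_subset hM]
  exact disjoint_filter_filter sdiff_disjoint

/-- Specification of a level function. -/
def LvlOK (E : Finset (V × V)) (ℓ : V × V → ℤ) : Prop :=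
  (∀ e ∈ E, ∀ f ∈ E, e ≠ f → (e.1 = f.1 ∨ e.2 = f.2) → ℓ e ≠ ℓ f) ∧
  (∀ e ∈ E, |ℓ e| ≤ (#E : ℤ)) ∧
  (∀ e ∈ E, (#(E.filter fun f => f.1 = e.1 ∧ ℓ f < ℓ e) : ℤ)
      ≤ (#(E.filter fun f => f.2 = e.2 ∧ ℓ f < ℓ e) : ℤ)
        + max 0 ((dX E e.1 : ℤ) - (dY E e.2 : ℤ)))

lemma exists_lvl (E : Finset (V × V)) : ∃ ℓ : V × V → ℤ, LvlOK E ℓ := by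
  classical
  induction E using Finset.strongInduction with
  | _ E ih =>
  rcases E.eq_empty_or_nonempty with rfl | hne
  · exact ⟨fun _ => 0, by simp [LvlOK]⟩
  obtain ⟨M, hMsub, hMne, hMpm, hsafe⟩ := exists_safe E hne
  have hss : E \ M ⊂ E := by
    obtain ⟨m, hm⟩ := hMne
    refine Finset.ssubset_iff_of_subset sdiff_subset |>.2 ⟨m, hMsub hm, by simp [hm]⟩
  obtain ⟨ℓ', h'inj, h'bnd, h'rank⟩ := ih (E \ M) hss
  have hcards : #(E \ M) + #M = #E := card_sdiff_add_card_eq_card hMsub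
  have hM1 : 1 ≤ #M := card_pos.2 hMne
  have h'bnd2 : ∀ f ∈ E \ M, -((#E : ℤ) - 1) ≤ ℓ' f ∧ ℓ' f ≤ (#E : ℤ) - 1 := by
    intro f hf
    have h1 := abs_le.1 (h'bnd f hf)
    have h2 : (#(E \ M) : ℤ) ≤ (#E : ℤ) - 1 := by
      have h3 : #(E \ M) + 1 ≤ #E := by omega
      omega
    constructor <;> omega
  rcases hsafe with hstd | hmir
  · -- standard safety: matching goes on top
    set ℓ : V × V → ℤ := fun e => if e ∈ M then (#E : ℤ) else ℓ' e with hℓ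
    have hℓM : ∀ f ∈ M, ℓ f = (#E : ℤ) := fun f hf => by simp [hℓ, hf]
    have hℓnM : ∀ f ∈ E \ M, ℓ f = ℓ' f := by
      intro f hf
      rw [mem_sdiff] at hf
      simp [hℓ, hf.2]
    refine ⟨ℓ, ?_, ?_, ?_⟩
    · -- injectivity
      intro e he f hf hnef hsh
      by_cases heM : e ∈ M <;> by_cases hfM : f ∈ M
      · rcases hsh with h | h
        · exact absurd h (hMpm e heM f hfM hnef).1
        · exact absurd h (hMpm e heM f hfM hnef).2
      · have hf' : f ∈ E \ M := mem_sdiff.2 ⟨hf, hfM⟩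
        rw [hℓM e heM, hℓnM f hf']
        have := h'bnd2 f hf'
        omega
      · have he' : e ∈ E \ M := mem_sdiff.2 ⟨he, heM⟩
        rw [hℓM f hfM, hℓnM e he']
        have := h'bnd2 e he'
        omega
      · have he' : e ∈ E \ M := mem_sdiff.2 ⟨he, heM⟩
        have hf' : f ∈ E \ M := mem_sdiff.2 ⟨hf, hfM⟩
        rw [hℓnM e he', hℓnM f hf']
        exact h'inj e he' f hf' hnef hsh
    · -- bounds
      intro e he
      by_cases heM : e ∈ M
      · rw [hℓM e heM]
        simp
      · have he' : e ∈ E \ M := mem_sdiff.2 ⟨he, heM⟩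
        rw [hℓnM e he']
        have := h'bnd2 e he'
        rw [abs_le]
        omega
    · -- rank inequality
      intro e he
      by_cases heM : e ∈ M
      · -- top edges
        have hLX : E.filter (fun f => f.1 = e.1 ∧ ℓ f < ℓ e)
            = (E.filter fun f => f.1 = e.1).erase e := by
          ext f
          simp only [mem_filter, mem_erase]
          constructor
          · rintro ⟨hfE, hf1, hlt⟩
            refine ⟨fun h => ?_, hfE, hf1⟩
            subst h; exact lt_irrefl _ hlt
          · rintro ⟨hfe, hfE, hf1⟩
            refine ⟨hfE, hf1, ?_⟩
            have hfM : f ∉ M := by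
              intro hfM
              exact (hMpm f hfM e heM hfe).1 hf1
            rw [hℓnM f (mem_sdiff.2 ⟨hfE, hfM⟩), hℓM e heM]
            have := h'bnd2 f (mem_sdiff.2 ⟨hfE, hfM⟩)
            omega
        have hLY : E.filter (fun f => f.2 = e.2 ∧ ℓ f < ℓ e)
            = (E.filter fun f => f.2 = e.2).erase e := by
          ext f
          simp only [mem_filter, mem_erase]
          constructor
          · rintro ⟨hfE, hf2, hlt⟩
            refine ⟨fun h => ?_, hfE, hf2⟩
            subst h; exact lt_irrefl _ hlt
          · rintro ⟨hfe, hfE, hf2⟩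
            refine ⟨hfE, hf2, ?_⟩
            have hfM : f ∉ M := by
              intro hfM
              exact (hMpm f hfM e heM hfe).2 hf2
            rw [hℓnM f (mem_sdiff.2 ⟨hfE, hfM⟩), hℓM e heM]
            have := h'bnd2 f (mem_sdiff.2 ⟨hfE, hfM⟩)
            omega
        have heX : e ∈ E.filter fun f => f.1 = e.1 := by simp [he]
        have heY : e ∈ E.filter fun f => f.2 = e.2 := by simp [he]
        rw [hLX, hLY, Finset.cast_card_erase_of_mem heX, Finset.cast_card_erase_of_mem heY]
        have hmax := le_max_right (0 : ℤ) ((dX E e.1 : ℤ) - (dY E e.2 : ℤ))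
        unfold dX dY
        omega
      · -- lower edges
        have he' : e ∈ E \ M := mem_sdiff.2 ⟨he, heM⟩
        have hℓe : ℓ e = ℓ' e := hℓnM e he'
        have hLX : E.filter (fun f => f.1 = e.1 ∧ ℓ f < ℓ e)
            = (E \ M).filter (fun f => f.1 = e.1 ∧ ℓ' f < ℓ' e) := by
          ext f
          simp only [mem_filter, mem_sdiff]
          constructor
          · rintro ⟨hfE, hf1, hlt⟩
            have hfM : f ∉ M := by
              intro hfM
              rw [hℓM f hfM, hℓe] at hlt
              have := h'bnd2 e he'
              omega
            rw [hℓnM f (mem_sdiff.2 ⟨hfE, hfM⟩), hℓe] at hlt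
            exact ⟨⟨hfE, hfM⟩, hf1, hlt⟩
          · rintro ⟨⟨hfE, hfM⟩, hf1, hlt⟩
            refine ⟨hfE, hf1, ?_⟩
            rw [hℓnM f (mem_sdiff.2 ⟨hfE, hfM⟩), hℓe]
            exact hlt
        have hLY : E.filter (fun f => f.2 = e.2 ∧ ℓ f < ℓ e)
            = (E \ M).filter (fun f => f.2 = e.2 ∧ ℓ' f < ℓ' e) := by
          ext f
          simp only [mem_filter, mem_sdiff]
          constructor
          · rintro ⟨hfE, hf2, hlt⟩
            have hfM : f ∉ M := by
              intro hfM
              rw [hℓM f hfM, hℓe] at hlt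
              have := h'bnd2 e he'
              omega
            rw [hℓnM f (mem_sdiff.2 ⟨hfE, hfM⟩), hℓe] at hlt
            exact ⟨⟨hfE, hfM⟩, hf2, hlt⟩
          · rintro ⟨⟨hfE, hfM⟩, hf2, hlt⟩
            refine ⟨hfE, hf2, ?_⟩
            rw [hℓnM f (mem_sdiff.2 ⟨hfE, hfM⟩), hℓe]
            exact hlt
        rw [hLX, hLY]
        have hIH := h'rank e he'
        -- degree bookkeeping
        have hdx : dX E e.1 = dX (E \ M) e.1 + #(M.filter fun f => f.1 = e.1) :=
          card_filter_split hMsub _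
        have hdy : dY E e.2 = dY (E \ M) e.2 + #(M.filter fun f => f.2 = e.2) :=
          card_filter_split hMsub _
        have hcu : #(M.filter fun f => f.1 = e.1) ≤ 1 := pm_filter_fst_le_one hMpm e.1
        have hcw : #(M.filter fun f => f.2 = e.2) ≤ 1 := pm_filter_snd_le_one hMpm e.2
        have hsf : 0 < #(M.filter fun f => f.2 = e.2) → dY E e.2 ≤ dX E e.1 →
            0 < #(M.filter fun f => f.1 = e.1) := by
          intro h1 h2
          obtain ⟨m, hm⟩ := card_pos.1 h1
          simp only [mem_filter] at hm
          have hcov : e.2 ∈ M.image Prod.snd := mem_image.2 ⟨m, hm.1, hm.2⟩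
          have := hstd e he hcov h2
          obtain ⟨m', hm', hm'1⟩ := mem_image.1 this
          exact card_pos.2 ⟨m', mem_filter.2 ⟨hm', hm'1⟩⟩
        have hmax1 := max_choice (0 : ℤ) ((dX E e.1 : ℤ) - (dY E e.2 : ℤ))
        have hmax1' := le_max_right (0 : ℤ) ((dX E e.1 : ℤ) - (dY E e.2 : ℤ))
        have hmax1'' := le_max_left (0 : ℤ) ((dX E e.1 : ℤ) - (dY E e.2 : ℤ))
        have hmax2 := max_choice (0 : ℤ) ((dX (E \ M) e.1 : ℤ) - (dY (E \ M) e.2 : ℤ))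
        have hmax2' := le_max_right (0 : ℤ) ((dX (E \ M) e.1 : ℤ) - (dY (E \ M) e.2 : ℤ))
        have hmax2'' := le_max_left (0 : ℤ) ((dX (E \ M) e.1 : ℤ) - (dY (E \ M) e.2 : ℤ))
        omega
  · -- mirrored safety: matching goes to the bottom
    set ℓ : V × V → ℤ := fun e => if e ∈ M then -(#E : ℤ) else ℓ' e with hℓ
    have hℓM : ∀ f ∈ M, ℓ f = -(#E : ℤ) := fun f hf => by simp [hℓ, hf]
    have hℓnM : ∀ f ∈ E \ M, ℓ f = ℓ' f := by
      intro f hf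
      rw [mem_sdiff] at hf
      simp [hℓ, hf.2]
    refine ⟨ℓ, ?_, ?_, ?_⟩
    · intro e he f hf hnef hsh
      by_cases heM : e ∈ M <;> by_cases hfM : f ∈ M
      · rcases hsh with h | h
        · exact absurd h (hMpm e heM f hfM hnef).1
        · exact absurd h (hMpm e heM f hfM hnef).2
      · have hf' : f ∈ E \ M := mem_sdiff.2 ⟨hf, hfM⟩
        rw [hℓM e heM, hℓnM f hf']
        have := h'bnd2 f hf'
        omega
      · have he' : e ∈ E \ M := mem_sdiff.2 ⟨he, heM⟩
        rw [hℓM f hfM, hℓnM e he']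
        have := h'bnd2 e he'
        omega
      · have he' : e ∈ E \ M := mem_sdiff.2 ⟨he, heM⟩
        have hf' : f ∈ E \ M := mem_sdiff.2 ⟨hf, hfM⟩
        rw [hℓnM e he', hℓnM f hf']
        exact h'inj e he' f hf' hnef hsh
    · intro e he
      by_cases heM : e ∈ M
      · rw [hℓM e heM]
        simp
      · have he' : e ∈ E \ M := mem_sdiff.2 ⟨he, heM⟩
        rw [hℓnM e he']
        have := h'bnd2 e he'
        rw [abs_le]
        omega
    · intro e he
      by_cases heM : e ∈ M
      · -- bottom edges: left count is zero
        have hLX : E.filter (fun f => f.1 = e.1 ∧ ℓ f < ℓ e) = ∅ := by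
          rw [eq_empty_iff_forall_notMem]
          intro f hf
          simp only [mem_filter] at hf
          obtain ⟨hfE, _, hlt⟩ := hf
          rw [hℓM e heM] at hlt
          by_cases hfM : f ∈ M
          · rw [hℓM f hfM] at hlt
            exact lt_irrefl _ hlt
          · rw [hℓnM f (mem_sdiff.2 ⟨hfE, hfM⟩)] at hlt
            have := h'bnd2 f (mem_sdiff.2 ⟨hfE, hfM⟩)
            omega
        rw [hLX]
        have hmax := le_max_left (0 : ℤ) ((dX E e.1 : ℤ) - (dY E e.2 : ℤ))
        have : (0 : ℤ) ≤ (#(E.filter fun f => f.2 = e.2 ∧ ℓ f < ℓ e) : ℤ) := by positivity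
        simp only [card_empty]
        omega
      · have he' : e ∈ E \ M := mem_sdiff.2 ⟨he, heM⟩
        have hℓe : ℓ e = ℓ' e := hℓnM e he'
        have hℓelb : -(#E : ℤ) < ℓ e := by
          rw [hℓe]
          have := h'bnd2 e he'
          omega
        have hLX : E.filter (fun f => f.1 = e.1 ∧ ℓ f < ℓ e)
            = (E \ M).filter (fun f => f.1 = e.1 ∧ ℓ' f < ℓ' e)
              ∪ M.filter (fun f => f.1 = e.1) := by
          ext f
          simp only [mem_filter, mem_sdiff, mem_union]
          constructor
          · rintro ⟨hfE, hf1, hlt⟩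
            by_cases hfM : f ∈ M
            · exact Or.inr ⟨hfM, hf1⟩
            · rw [hℓnM f (mem_sdiff.2 ⟨hfE, hfM⟩), hℓe] at hlt
              exact Or.inl ⟨⟨hfE, hfM⟩, hf1, hlt⟩
          · rintro (⟨⟨hfE, hfM⟩, hf1, hlt⟩ | ⟨hfM, hf1⟩)
            · refine ⟨hfE, hf1, ?_⟩
              rw [hℓnM f (mem_sdiff.2 ⟨hfE, hfM⟩), hℓe]
              exact hlt
            · refine ⟨hMsub hfM, hf1, ?_⟩
              rw [hℓM f hfM]
              exact hℓelb
        have hLY : E.filter (fun f => f.2 = e.2 ∧ ℓ f < ℓ e)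
            = (E \ M).filter (fun f => f.2 = e.2 ∧ ℓ' f < ℓ' e)
              ∪ M.filter (fun f => f.2 = e.2) := by
          ext f
          simp only [mem_filter, mem_sdiff, mem_union]
          constructor
          · rintro ⟨hfE, hf2, hlt⟩
            by_cases hfM : f ∈ M
            · exact Or.inr ⟨hfM, hf2⟩
            · rw [hℓnM f (mem_sdiff.2 ⟨hfE, hfM⟩), hℓe] at hlt
              exact Or.inl ⟨⟨hfE, hfM⟩, hf2, hlt⟩
          · rintro (⟨⟨hfE, hfM⟩, hf2, hlt⟩ | ⟨hfM, hf2⟩)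
            · refine ⟨hfE, hf2, ?_⟩
              rw [hℓnM f (mem_sdiff.2 ⟨hfE, hfM⟩), hℓe]
              exact hlt
            · refine ⟨hMsub hfM, hf2, ?_⟩
              rw [hℓM f hfM]
              exact hℓelb
        have hdijX : Disjoint ((E \ M).filter (fun f => f.1 = e.1 ∧ ℓ' f < ℓ' e))
            (M.filter (fun f => f.1 = e.1)) :=
          disjoint_filter_filter sdiff_disjoint
        have hdijY : Disjoint ((E \ M).filter (fun f => f.2 = e.2 ∧ ℓ' f < ℓ' e))
            (M.filter (fun f => f.2 = e.2)) :=
          disjoint_filter_filter sdiff_disjoint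
        rw [hLX, hLY, card_union_of_disjoint hdijX, card_union_of_disjoint hdijY]
        have hIH := h'rank e he'
        have hdx : dX E e.1 = dX (E \ M) e.1 + #(M.filter fun f => f.1 = e.1) :=
          card_filter_split hMsub _
        have hdy : dY E e.2 = dY (E \ M) e.2 + #(M.filter fun f => f.2 = e.2) :=
          card_filter_split hMsub _
        have hcu : #(M.filter fun f => f.1 = e.1) ≤ 1 := pm_filter_fst_le_one hMpm e.1
        have hcw : #(M.filter fun f => f.2 = e.2) ≤ 1 := pm_filter_snd_le_one hMpm e.2
        have hsf : 0 < #(M.filter fun f => f.1 = e.1) → dX E e.1 ≤ dY E e.2 →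
            0 < #(M.filter fun f => f.2 = e.2) := by
          intro h1 h2
          obtain ⟨m, hm⟩ := card_pos.1 h1
          simp only [mem_filter] at hm
          have hcov : e.1 ∈ M.image Prod.fst := mem_image.2 ⟨m, hm.1, hm.2⟩
          have := hmir e he hcov h2
          obtain ⟨m', hm', hm'2⟩ := mem_image.1 this
          exact card_pos.2 ⟨m', mem_filter.2 ⟨hm', hm'2⟩⟩
        have hmax1 := max_choice (0 : ℤ) ((dX E e.1 : ℤ) - (dY E e.2 : ℤ))
        have hmax1' := le_max_right (0 : ℤ) ((dX E e.1 : ℤ) - (dY E e.2 : ℤ))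
        have hmax1'' := le_max_left (0 : ℤ) ((dX E e.1 : ℤ) - (dY E e.2 : ℤ))
        have hmax2 := max_choice (0 : ℤ) ((dX (E \ M) e.1 : ℤ) - (dY (E \ M) e.2 : ℤ))
        have hmax2' := le_max_right (0 : ℤ) ((dX (E \ M) e.1 : ℤ) - (dY (E \ M) e.2 : ℤ))
        have hmax2'' := le_max_left (0 : ℤ) ((dX (E \ M) e.1 : ℤ) - (dY (E \ M) e.2 : ℤ))
        omega


/-- Existence of a stable matching (kernel of the Galvin orientation). -/
lemma exists_stable (H : Finset (V × V)) (ℓ : V × V → ℤ)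
    (hinj : ∀ e ∈ H, ∀ f ∈ H, e ≠ f → (e.1 = f.1 ∨ e.2 = f.2) → ℓ e ≠ ℓ f) :
    ∃ M ⊆ H, IsPM M ∧ ∀ f ∈ H, f ∉ M →
      ∃ e ∈ M, (e.1 = f.1 ∧ ℓ e < ℓ f) ∨ (e.2 = f.2 ∧ ℓ f < ℓ e) := by
  classical
  -- proposals: alive edges minimal at their first coordinate
  let P : Finset (V × V) → Finset (V × V) := fun R =>
    (H \ R).filter fun e => ∀ f ∈ H \ R, f.1 = e.1 → ℓ e ≤ ℓ f
  -- rejected proposals: beaten at their second coordinate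
  let rej : Finset (V × V) → Finset (V × V) := fun R =>
    (P R).filter fun e => ∃ g ∈ P R, g.2 = e.2 ∧ ℓ e < ℓ g
  have hPsub : ∀ R, P R ⊆ H \ R := fun R => filter_subset _ _
  -- invariant: rejected edges are beaten by a current proposal at the same second coord
  have key : ∀ n (R : Finset (V × V)), R ⊆ H → #(H \ R) ≤ n →
      (∀ e ∈ R, ∃ g ∈ P R, g.2 = e.2 ∧ ℓ e < ℓ g) →
      ∃ M ⊆ H, IsPM M ∧ ∀ f ∈ H, f ∉ M →
        ∃ e ∈ M, (e.1 = f.1 ∧ ℓ e < ℓ f) ∨ (e.2 = f.2 ∧ ℓ f < ℓ e) := by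
    intro n
    induction n with
    | zero =>
      intro R hRH hcard hInv
      have hempty : H \ R = ∅ := card_eq_zero.1 (Nat.le_zero.1 hcard)
      refine ⟨∅, empty_subset _, by intro e he; simp at he, ?_⟩
      intro f hf hfM
      have : f ∈ R := by
        by_contra hfR
        have : f ∈ H \ R := mem_sdiff.2 ⟨hf, hfR⟩
        rw [hempty] at this
        exact notMem_empty f this
      obtain ⟨g, hg, _⟩ := hInv f this
      have := hPsub R hg
      rw [hempty] at this
      exact absurd this (notMem_empty g)
    | succ n ih =>
      intro R hRH hcard hInv
      by_cases hrej : rej R = ∅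
      · -- done: P R is the stable matching
        refine ⟨P R, (hPsub R).trans sdiff_subset, ?_, ?_⟩
        · intro e he f hf hne
          have heH : e ∈ H := sdiff_subset (hPsub R he)
          have hfH : f ∈ H := sdiff_subset (hPsub R hf)
          constructor
          · intro h1
            have h2 := (mem_filter.1 he).2 f (hPsub R hf) (h1.symm)
            have h3 := (mem_filter.1 hf).2 e (hPsub R he) h1
            exact hinj e heH f hfH hne (Or.inl h1) (le_antisymm h2 h3)
          · intro h2
            have hne' := hinj e heH f hfH hne (Or.inr h2)
            rcases lt_or_gt_of_ne hne' with hlt | hgt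
            · have : e ∈ rej R := mem_filter.2 ⟨he, f, hf, h2.symm, hlt⟩
              rw [hrej] at this
              exact notMem_empty e this
            · have : f ∈ rej R := mem_filter.2 ⟨hf, e, he, h2, hgt⟩
              rw [hrej] at this
              exact notMem_empty f this
        · intro f hf hfM
          by_cases hfR : f ∈ R
          · obtain ⟨g, hg, hg2, hglt⟩ := hInv f hfR
            exact ⟨g, hg, Or.inr ⟨hg2, hglt⟩⟩
          · have hfalive : f ∈ H \ R := mem_sdiff.2 ⟨hf, hfR⟩
            obtain ⟨e, he, hemin⟩ := ((H \ R).filter fun g => g.1 = f.1).exists_min_image ℓ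
              ⟨f, mem_filter.2 ⟨hfalive, rfl⟩⟩
            simp only [mem_filter] at he
            have heP : e ∈ P R := by
              refine mem_filter.2 ⟨he.1, ?_⟩
              intro g hg hg1
              exact hemin g (mem_filter.2 ⟨hg, hg1.trans he.2⟩)
            have hne : e ≠ f := by
              rintro rfl
              exact hfM heP
            have hlef := hemin f (mem_filter.2 ⟨hfalive, rfl⟩)
            have hnef := hinj e (sdiff_subset he.1) f hf hne (Or.inl he.2)
            exact ⟨e, heP, Or.inl ⟨he.2, lt_of_le_of_ne hlef hnef⟩⟩
      · -- recurse with more rejections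
        obtain ⟨r0, hr0⟩ := nonempty_iff_ne_empty.2 hrej
        have hrejP : rej R ⊆ P R := filter_subset _ _
        have hrejH : rej R ⊆ H \ R := fun x hx => hPsub R (hrejP hx)
        set R' := R ∪ rej R with hR'
        have hR'H : R' ⊆ H := union_subset hRH (hrejH.trans sdiff_subset)
        have hsdiff : H \ R' ⊂ H \ R := by
          refine Finset.ssubset_iff_of_subset (sdiff_subset_sdiff (le_refl _) subset_union_left) |>.2 ?_
          refine ⟨r0, ?_, ?_⟩
          · exact hrejH hr0
          · simp only [mem_sdiff, not_and, not_not, hR']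
            intro _
            exact mem_union_right R hr0
        have hcard' : #(H \ R') ≤ n := by
          have := card_lt_card hsdiff
          omega
        -- stability of surviving proposals
        have hPmono : ∀ e ∈ P R, e ∉ rej R → e ∈ P R' := by
          intro e he hrej'
          have healive : e ∈ H \ R' := by
            have h1 := hPsub R he
            rw [mem_sdiff] at h1 ⊢
            refine ⟨h1.1, ?_⟩
            simp only [hR', mem_union]
            rintro (h | h)
            · exact h1.2 h
            · exact hrej' h
          refine mem_filter.2 ⟨healive, ?_⟩
          intro f hf hf1
          exact (mem_filter.1 he).2 f (sdiff_subset_sdiff (le_refl _) subset_union_left hf) hf1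
        refine ih R' hR'H hcard' ?_
        -- invariant preservation
        intro e heR'
        -- first get some beating proposal at e.2
        have hbeat : ∃ g ∈ P R, g.2 = e.2 ∧ ℓ e < ℓ g := by
          rcases mem_union.1 heR' with h | h
          · exact hInv e h
          · exact (mem_filter.1 h).2
        obtain ⟨g0, hg0, hg02, hg0lt⟩ := hbeat
        -- take the maximal proposal at e.2
        obtain ⟨g, hg, hgmax⟩ := ((P R).filter fun x => x.2 = e.2).exists_max_image ℓ
          ⟨g0, mem_filter.2 ⟨hg0, hg02⟩⟩
        simp only [mem_filter] at hg
        have hgrej : g ∉ rej R := by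
          intro hgr
          obtain ⟨h, hh, hh2, hhlt⟩ := (mem_filter.1 hgr).2
          have := hgmax h (mem_filter.2 ⟨hh, hh2.trans hg.2⟩)
          omega
        refine ⟨g, hPmono g hg.1 hgrej, hg.2, ?_⟩
        have := hgmax g0 (mem_filter.2 ⟨hg0, hg02⟩)
        omega
  exact key #(H) ∅ (empty_subset _) (by simp) (by simp)


/-- Out-degree of an edge in the Galvin orientation restricted to `H`. -/
def beta (H : Finset (V × V)) (ℓ : V × V → ℤ) (e : V × V) : ℕ :=
  #(H.filter fun f => (f.1 = e.1 ∧ ℓ f < ℓ e) ∨ (f.2 = e.2 ∧ ℓ e < ℓ f))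

lemma color_rec (ℓ : V × V → ℤ) :
    ∀ (cs : List ℕ) (H : Finset (V × V)) (L : V × V → Finset ℕ),
    (∀ e ∈ H, ∀ f ∈ H, e ≠ f → (e.1 = f.1 ∨ e.2 = f.2) → ℓ e ≠ ℓ f) →
    (∀ e ∈ H, L e ⊆ cs.toFinset ∧ beta H ℓ e < #(L e)) →
    ∃ C : V × V → ℕ, (∀ e ∈ H, C e ∈ L e) ∧
      (∀ e ∈ H, ∀ f ∈ H, e ≠ f → (e.1 = f.1 ∨ e.2 = f.2) → C e ≠ C f) := by
  classical
  intro cs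
  induction cs with
  | nil =>
    intro H L hinj hL
    have : H = ∅ := by
      rw [eq_empty_iff_forall_notMem]
      intro e he
      obtain ⟨hsub, hlt⟩ := hL e he
      have h1 : 0 < #(L e) := by omega
      obtain ⟨c, hc⟩ := card_pos.1 h1
      have := hsub hc
      simp at this
    subst this
    exact ⟨fun _ => 0, by simp, by simp⟩
  | cons γ cs ihc =>
    intro H L hinj hL
    set Hγ := H.filter (fun e => γ ∈ L e) with hHγ
    have hHγsub : Hγ ⊆ H := filter_subset _ _
    obtain ⟨M, hMsub, hMpm, hMdom⟩ := exists_stable Hγ ℓ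
      (fun e he f hf => hinj e (hHγsub he) f (hHγsub hf))
    set H' := H \ M with hH'
    have hH'sub : H' ⊆ H := sdiff_subset
    set L' : V × V → Finset ℕ := fun e => (L e).erase γ with hL'
    have hMH : M ⊆ H := hMsub.trans hHγsub
    have hstep : ∀ e ∈ H', L' e ⊆ cs.toFinset ∧ beta H' ℓ e < #(L' e) := by
      intro e he
      have heH : e ∈ H := hH'sub he
      obtain ⟨hsub, hlt⟩ := hL e heH
      constructor
      · intro x hx
        have hx1 := mem_erase.1 hx
        have := hsub hx1.2
        simp only [List.toFinset_cons, mem_insert] at this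
        rcases this with h | h
        · exact absurd h hx1.1
        · exact h
      · by_cases hγ : γ ∈ L e
        · -- e was a candidate but not chosen: its out-degree drops
          have heHγ : e ∈ Hγ := mem_filter.2 ⟨heH, hγ⟩
          have heM : e ∉ M := (mem_sdiff.1 he).2
          obtain ⟨m, hm, hmdom⟩ := hMdom e heHγ heM
          have hmβ : m ∈ H.filter fun f =>
              (f.1 = e.1 ∧ ℓ f < ℓ e) ∨ (f.2 = e.2 ∧ ℓ e < ℓ f) := by
            refine mem_filter.2 ⟨hMH hm, ?_⟩
            rcases hmdom with ⟨h1, h2⟩ | ⟨h1, h2⟩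
            · exact Or.inl ⟨h1, h2⟩
            · exact Or.inr ⟨h1, h2⟩
          have hsubset : H'.filter (fun f => (f.1 = e.1 ∧ ℓ f < ℓ e) ∨ (f.2 = e.2 ∧ ℓ e < ℓ f))
              ⊆ (H.filter fun f => (f.1 = e.1 ∧ ℓ f < ℓ e) ∨ (f.2 = e.2 ∧ ℓ e < ℓ f)).erase m := by
            intro f hf
            have h1 := mem_filter.1 hf
            refine mem_erase.2 ⟨?_, mem_filter.2 ⟨hH'sub h1.1, h1.2⟩⟩
            intro hfm
            subst hfm
            exact (mem_sdiff.1 h1.1).2 hm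
          have hcard1 : beta H' ℓ e ≤ beta H ℓ e - 1 := by
            have h2 := card_le_card hsubset
            have h3 := card_erase_of_mem hmβ
            unfold beta
            omega
          have hβpos : 1 ≤ beta H ℓ e := card_pos.2 ⟨m, hmβ⟩
          have hLe : #(L' e) = #(L e) - 1 := by
            simp [hL', card_erase_of_mem hγ]
          have hLpos : 1 ≤ #(L e) := by omega
          omega
        · have hLe : L' e = L e := by simp [hL', erase_eq_of_notMem hγ]
          have hb : beta H' ℓ e ≤ beta H ℓ e :=
            card_le_card (filter_subset_filter _ hH'sub)
          rw [hLe]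
          omega
    obtain ⟨C', hC'mem, hC'prop⟩ := ihc H' L'
      (fun e he f hf => hinj e (hH'sub he) f (hH'sub hf)) hstep
    refine ⟨fun e => if e ∈ M then γ else C' e, ?_, ?_⟩
    · intro e he
      by_cases heM : e ∈ M
      · simp only [if_pos heM]
        exact (mem_filter.1 (hMsub heM)).2
      · simp only [if_neg heM]
        have he' : e ∈ H' := mem_sdiff.2 ⟨he, heM⟩
        exact erase_subset γ (L e) (hC'mem e he')
    · intro e he f hf hne hsh
      by_cases heM : e ∈ M <;> by_cases hfM : f ∈ M
      · exfalso
        rcases hsh with h | h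
        · exact (hMpm e heM f hfM hne).1 h
        · exact (hMpm e heM f hfM hne).2 h
      · simp only [if_pos heM, if_neg hfM]
        have hf' : f ∈ H' := mem_sdiff.2 ⟨hf, hfM⟩
        have := hC'mem f hf'
        intro h
        rw [← h] at this
        exact notMem_erase γ (L f) this
      · simp only [if_neg heM, if_pos hfM]
        have he' : e ∈ H' := mem_sdiff.2 ⟨he, heM⟩
        have := hC'mem e he'
        intro h
        rw [h] at this
        exact notMem_erase γ (L e) this
      · simp only [if_neg heM, if_neg hfM]
        exact hC'prop e (mem_sdiff.2 ⟨he, heM⟩) f (mem_sdiff.2 ⟨hf, hfM⟩) hne hsh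


theorem pair_colorable (E : Finset (V × V)) (L : V × V → Finset ℕ)
    (hL : ∀ e ∈ E, max (dX E e.1) (dY E e.2) ≤ #(L e)) :
    ∃ C : V × V → ℕ, (∀ e ∈ E, C e ∈ L e) ∧
      (∀ e ∈ E, ∀ f ∈ E, e ≠ f → (e.1 = f.1 ∨ e.2 = f.2) → C e ≠ C f) := by
  classical
  obtain ⟨ℓ, hinj, hbnd, hrank⟩ := exists_lvl E
  refine color_rec ℓ (E.biUnion L).toList E L hinj ?_
  intro e he
  constructor
  · intro x hx
    rw [Finset.toList_toFinset]
    exact mem_biUnion.2 ⟨e, he, hx⟩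
  · -- the out-degree bound
    have hdisj : Disjoint (E.filter fun f => f.1 = e.1 ∧ ℓ f < ℓ e)
        (E.filter fun f => f.2 = e.2 ∧ ℓ e < ℓ f) := by
      rw [Finset.disjoint_left]
      intro f h1 h2
      have := (mem_filter.1 h1).2.2
      have := (mem_filter.1 h2).2.2
      omega
    have hsplit : beta E ℓ e = #(E.filter fun f => f.1 = e.1 ∧ ℓ f < ℓ e)
        + #(E.filter fun f => f.2 = e.2 ∧ ℓ e < ℓ f) := by
      unfold beta
      rw [filter_or, card_union_of_disjoint hdisj]
    -- trichotomy at the second coordinate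
    have htri : #(E.filter fun f => f.2 = e.2 ∧ ℓ f < ℓ e)
        + #(E.filter fun f => f.2 = e.2 ∧ ℓ e < ℓ f) + 1 = dY E e.2 := by
      have hdisj2 : Disjoint (E.filter fun f => f.2 = e.2 ∧ ℓ f < ℓ e)
          (E.filter fun f => f.2 = e.2 ∧ ℓ e < ℓ f) := by
        rw [Finset.disjoint_left]
        intro f h1 h2
        have := (mem_filter.1 h1).2.2
        have := (mem_filter.1 h2).2.2
        omega
      have hdisj3 : Disjoint ((E.filter fun f => f.2 = e.2 ∧ ℓ f < ℓ e)
          ∪ (E.filter fun f => f.2 = e.2 ∧ ℓ e < ℓ f)) {e} := by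
        rw [Finset.disjoint_left]
        intro f h1 h2
        rw [mem_singleton] at h2
        subst h2
        rcases mem_union.1 h1 with h | h
        · have := (mem_filter.1 h).2.2; omega
        · have := (mem_filter.1 h).2.2; omega
      have hunion : (E.filter fun f => f.2 = e.2 ∧ ℓ f < ℓ e)
          ∪ (E.filter fun f => f.2 = e.2 ∧ ℓ e < ℓ f) ∪ {e}
          = E.filter fun f => f.2 = e.2 := by
        ext f
        simp only [mem_union, mem_filter, mem_singleton]
        constructor
        · rintro ((⟨h1, h2, _⟩ | ⟨h1, h2, _⟩) | rfl)
          · exact ⟨h1, h2⟩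
          · exact ⟨h1, h2⟩
          · exact ⟨he, rfl⟩
        · rintro ⟨hfE, hf2⟩
          rcases lt_trichotomy (ℓ f) (ℓ e) with h | h | h
          · exact Or.inl (Or.inl ⟨hfE, hf2, h⟩)
          · right
            by_contra hne
            exact hinj f hfE e he hne (Or.inr hf2) h
          · exact Or.inl (Or.inr ⟨hfE, hf2, h⟩)
      have := congrArg card hunion
      rw [card_union_of_disjoint hdisj3, card_union_of_disjoint hdisj2,
        card_singleton] at this
      exact this
    have hr := hrank e he
    have hLe := hL e he
    have hm1 := max_choice (dX E e.1) (dY E e.2)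
    have hm2 := Nat.le_max_left (dX E e.1) (dY E e.2)
    have hm3 := Nat.le_max_right (dX E e.1) (dY E e.2)
    have hz1 := max_choice (0 : ℤ) ((dX E e.1 : ℤ) - (dY E e.2 : ℤ))
    have hz2 := le_max_left (0 : ℤ) ((dX E e.1 : ℤ) - (dY E e.2 : ℤ))
    have hz3 := le_max_right (0 : ℤ) ((dX E e.1 : ℤ) - (dY E e.2 : ℤ))
    omega


end BKW

/-- Borodin–Kostochka–Woodall: in a bipartite graph, lists of size
`max (deg u) (deg w)` on each edge `uw` admit a proper list edge coloring. -/
theorem stmt_5 {V : Type*} [Fintype V] (G : SimpleGraph V) [DecidableRel G.Adj]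
    (hbip : G.Colorable 2) (L : Sym2 V → Finset ℕ)
    (hL : ∀ u w : V, G.Adj u w → max (G.degree u) (G.degree w) ≤ (L s(u, w)).card) :
    ∃ C : Sym2 V → ℕ, IsProperEdgeColoring G C ∧ ∀ e ∈ G.edgeSet, C e ∈ L e := by
  classical
  obtain ⟨col⟩ := hbip
  have fin2 : ∀ x : Fin 2, x ≠ 0 → x = 1 := by decide
  set E : Finset (V × V) :=
    Finset.univ.filter (fun p : V × V => G.Adj p.1 p.2 ∧ col p.1 = 0) with hE
  have hmemE : ∀ p : V × V, p ∈ E ↔ G.Adj p.1 p.2 ∧ col p.1 = 0 := by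
    intro p
    simp [hE]
  have hcol2 : ∀ p ∈ E, col p.2 = 1 := by
    intro p hp
    rw [hmemE] at hp
    refine fin2 _ ?_
    intro h
    exact col.valid hp.1 (hp.2.trans h.symm)
  -- degrees agree
  have hdX : ∀ u : V, col u = 0 → BKW.dX E u = G.degree u := by
    intro u hu
    have : E.filter (fun f => f.1 = u) = (G.neighborFinset u).image (fun w => (u, w)) := by
      ext p
      simp only [Finset.mem_filter, Finset.mem_image, mem_neighborFinset, hmemE]
      constructor
      · rintro ⟨⟨hadj, _⟩, h1⟩
        exact ⟨p.2, by rw [← h1]; exact hadj, by rw [← h1]⟩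
      · rintro ⟨w, hadj, rfl⟩
        exact ⟨⟨hadj, hu⟩, rfl⟩
    rw [BKW.dX, this, Finset.card_image_of_injective _ (fun a b h => congrArg Prod.snd h)]
    rfl
  have hdY : ∀ w : V, col w = 1 → BKW.dY E w = G.degree w := by
    intro w hw
    have : E.filter (fun f => f.2 = w) = (G.neighborFinset w).image (fun u => (u, w)) := by
      ext p
      simp only [Finset.mem_filter, Finset.mem_image, mem_neighborFinset, hmemE]
      constructor
      · rintro ⟨⟨hadj, hc⟩, h2⟩
        exact ⟨p.1, by rw [← h2]; exact hadj.symm, by rw [← h2]⟩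
      · rintro ⟨u, hadj, rfl⟩
        refine ⟨⟨hadj.symm, ?_⟩, rfl⟩
        refine by_contra fun h => ?_
        have h1 := fin2 _ h
        exact col.valid hadj (hw.trans h1.symm)
    rw [BKW.dY, this, Finset.card_image_of_injective _ (fun a b h => congrArg Prod.fst h)]
    rfl
  -- apply the pair coloring theorem
  have hdeg : ∀ e ∈ E, max (BKW.dX E e.1) (BKW.dY E e.2) ≤ #(L s(e.1, e.2)) := by
    intro e he
    have h1 := (hmemE e).1 he
    rw [hdX e.1 h1.2, hdY e.2 (hcol2 e he)]
    exact hL e.1 e.2 h1.1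
  obtain ⟨C', hC'mem, hC'prop⟩ := BKW.pair_colorable E (fun p => L s(p.1, p.2)) hdeg
  -- build the Sym2 coloring
  set g : V → V → ℕ := fun a b =>
    if col a = 0 ∧ col b = 1 then C' (a, b)
    else if col b = 0 ∧ col a = 1 then C' (b, a) else 0 with hg
  have hgsymm : ∀ a b, g a b = g b a := by
    intro a b
    by_cases h1 : col a = 0 ∧ col b = 1
    · have h2 : ¬(col b = 0 ∧ col a = 1) := by
        rintro ⟨hb, _⟩
        rw [h1.2] at hb
        exact absurd hb (by decide)
      simp [hg, h1, h2]
    · by_cases h2 : col b = 0 ∧ col a = 1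
      · simp [hg, h1, h2]
      · simp [hg, h1, h2]
  set C : Sym2 V → ℕ := Sym2.lift ⟨g, hgsymm⟩ with hC
  have hCmk : ∀ a b, C s(a, b) = g a b := fun a b => Sym2.lift_mk _ a b
  have hCval : ∀ a b, G.Adj a b → col a = 0 → C s(a, b) = C' (a, b) ∧ (a, b) ∈ E := by
    intro a b hadj ha
    have hb : col b = 1 := fin2 _ (fun h => col.valid hadj (ha.trans h.symm))
    constructor
    · rw [hCmk]
      simp [hg, ha, hb]
    · rw [hmemE]
      exact ⟨hadj, ha⟩
  refine ⟨C, ?_, ?_⟩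
  · -- properness
    intro e he f hf hnef hshare
    obtain ⟨v, hv_e, hv_f⟩ := hshare
    obtain ⟨x, rfl⟩ := (Sym2.mem_iff_exists).1 hv_e
    obtain ⟨y, rfl⟩ := (Sym2.mem_iff_exists).1 hv_f
    rw [mem_edgeSet] at he hf
    have hxy : x ≠ y := fun h => hnef (by rw [h])
    by_cases hv : col v = 0
    · obtain ⟨he1, he2⟩ := hCval v x he hv
      obtain ⟨hf1, hf2⟩ := hCval v y hf hv
      rw [he1, hf1]
      exact hC'prop (v, x) he2 (v, y) hf2
        (fun h => hxy (congrArg Prod.snd h)) (Or.inl rfl)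
    · have hv1 : col v = 1 := fin2 _ hv
      have hx : col x = 0 := by
        refine by_contra fun h => ?_
        exact col.valid he.symm ((fin2 _ h).trans hv1.symm)
      have hy : col y = 0 := by
        refine by_contra fun h => ?_
        exact col.valid hf.symm ((fin2 _ h).trans hv1.symm)
      rw [Sym2.eq_swap (a := v) (b := x), Sym2.eq_swap (a := v) (b := y)]
      obtain ⟨he1, he2⟩ := hCval x v he.symm hx
      obtain ⟨hf1, hf2⟩ := hCval y v hf.symm hy
      rw [he1, hf1]
      exact hC'prop (x, v) he2 (y, v) hf2
        (fun h => hxy (congrArg Prod.fst h)) (Or.inr rfl)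
  · -- membership
    intro e he
    induction e using Sym2.ind with
    | _ a b =>
      rw [mem_edgeSet] at he
      by_cases ha : col a = 0
      · obtain ⟨h1, h2⟩ := hCval a b he ha
        rw [h1]
        exact hC'mem (a, b) h2
      · have ha1 : col a = 1 := fin2 _ ha
        have hb : col b = 0 := by
          refine by_contra fun h => ?_
          exact col.valid he.symm ((fin2 _ h).trans ha1.symm)
        rw [Sym2.eq_swap]
        obtain ⟨h1, h2⟩ := hCval b a he.symm hb
        rw [h1]
        have := hC'mem (b, a) h2
        exact this
end

section
/- The chromatic index of the complete graph K_{2m} on 2m vertices equals 2m − 1; that is, the edges of K_{2m} can be properly colored with 2m − 1 colors and no fewer. -/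
open SimpleGraph

/-- Round-robin color of pair `(i, j)`. -/
def rrg (m : ℕ) (i j : Fin (2*m)) : ℕ :=
  if i.val = 2*m-1 then (2*j.val) % (2*m-1)
  else if j.val = 2*m-1 then (2*i.val) % (2*m-1)
  else (i.val + j.val) % (2*m-1)

lemma rrg_symm (m : ℕ) (i j : Fin (2*m)) : rrg m i j = rrg m j i := by
  unfold rrg
  by_cases h1 : i.val = 2*m-1 <;> by_cases h2 : j.val = 2*m-1 <;>
    simp [h1, h2, Nat.add_comm]

lemma mod_small (N s : ℕ) (hs : s < 2*N) : s % N = if s < N then s else s - N := by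
  split_ifs with h
  · exact Nat.mod_eq_of_lt h
  · rw [Nat.mod_eq_sub_mod (by omega), Nat.mod_eq_of_lt (by omega)]

lemma rrg_ne (m : ℕ) (hm : 1 ≤ m) {a b c : Fin (2*m)}
    (hab : a.val ≠ b.val) (hac : a.val ≠ c.val) (hbc : b.val ≠ c.val) :
    rrg m a b ≠ rrg m a c := by
  have ha := a.isLt; have hb := b.isLt; have hc := c.isLt
  unfold rrg
  split_ifs <;>
    first
      | omega
      | (rw [mod_small _ _ (by omega), mod_small _ _ (by omega)]
         split_ifs <;> omega)

lemma rrg_lt (m : ℕ) (hm : 1 ≤ m) (i j : Fin (2*m)) : rrg m i j < 2*m-1 := by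
  unfold rrg; split_ifs <;> exact Nat.mod_lt _ (by omega)

def rrcol (m : ℕ) : Sym2 (Fin (2*m)) → ℕ := Sym2.lift ⟨rrg m, rrg_symm m⟩

lemma rrcol_lt (m : ℕ) (hm : 1 ≤ m) (e : Sym2 (Fin (2*m))) : rrcol m e < 2*m-1 := by
  induction e using Sym2.ind with
  | _ x y => exact rrg_lt m hm x y

/-- The chromatic index of the complete graph `K_{2m}` is `2m - 1`. -/
theorem stmt_6 (m : ℕ) (hm : 1 ≤ m) :
    chromIndex (⊤ : SimpleGraph (Fin (2 * m))) = 2 * m - 1 := by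
  have hmem : (2*m-1) ∈ {n | ∃ C : (⊤ : SimpleGraph (Fin (2*m))).edgeSet → Fin n,
      IsProperEdgeColoring' ⊤ C} := by
    refine ⟨fun e => ⟨rrcol m e.val, rrcol_lt m hm e.val⟩, ?_⟩
    rintro e f hef ⟨v, hv1, hv2⟩
    have hb := Sym2.other_spec hv1
    have hc := Sym2.other_spec hv2
    set b := Sym2.Mem.other hv1
    set c := Sym2.Mem.other hv2
    have he2 := e.2
    have hf2 := f.2
    rw [← hb] at he2
    rw [← hc] at hf2
    rw [SimpleGraph.mem_edgeSet, top_adj] at he2 hf2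
    have hbc : b ≠ c := by
      intro h
      apply hef
      apply Subtype.ext
      rw [← hb, ← hc, h]
    simp only [Ne, Fin.ext_iff, Subtype.mk.injEq]
    rw [← hb, ← hc]
    show rrcol m s(v, b) ≠ rrcol m s(v, c)
    simp only [rrcol, Sym2.lift_mk]
    exact rrg_ne m hm (fun h => he2 (Fin.ext h)) (fun h => hf2 (Fin.ext h))
      (fun h => hbc (Fin.ext h))
  apply le_antisymm
  · exact Nat.sInf_le hmem
  · refine le_csInf ⟨_, hmem⟩ ?_
    rintro n ⟨C, hC⟩
    -- map Fin (2m-1) injectively into colors via edges at vertex 0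
    have h2m : 0 < 2*m := by omega
    set z : Fin (2*m) := ⟨0, h2m⟩
    have hedge : ∀ k : Fin (2*m-1), s(z, (⟨k.val+1, by omega⟩ : Fin (2*m)))
        ∈ (⊤ : SimpleGraph (Fin (2*m))).edgeSet := by
      intro k
      rw [SimpleGraph.mem_edgeSet, top_adj]
      intro h
      have := congrArg Fin.val h
      simp [z] at this
    have hinj : Function.Injective
        (fun k : Fin (2*m-1) => C ⟨s(z, ⟨k.val+1, by omega⟩), hedge k⟩) := by
      intro k1 k2 h
      by_contra hne
      refine hC ⟨_, hedge k1⟩ ⟨_, hedge k2⟩ ?_ ⟨z, by simp, by simp⟩ h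
      intro heq
      apply hne
      have := congrArg Subtype.val heq
      simp only at this
      rw [Sym2.congr_right] at this
      exact Fin.ext (by simpa using congrArg Fin.val this)
    have := Fintype.card_le_of_injective _ hinj
    simpa using this
end

section
/- If G is a bipartite graph, then its chromatic index equals its maximum degree: χ'(G) = Δ(G) (König's edge coloring theorem). -/
open SimpleGraph

lemma kempe_aux {V : Type*} (H : SimpleGraph V) (c : V → Fin 2)
    (hc : ∀ {x y}, H.Adj x y → c x ≠ c y)
    (col : Sym2 V → ℕ) (a b : ℕ)
    (hprop : ∀ {x y z : V}, H.Adj x y → H.Adj y z → x ≠ z → col s(x,y) ≠ col s(y,z))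
    (hcol : ∀ {x y}, H.Adj x y → col s(x,y) = a ∨ col s(x,y) = b)
    (u : V) (hu : ∀ {x}, H.Adj u x → col s(u,x) = b) (cu : Fin 2) :
    ∀ (y w : V) (q : H.Walk y w), w = u → c u = cu → ∀ (x : V) (h : H.Adj x y),
      (SimpleGraph.Walk.cons h q).IsPath → col s(x,y) = if c x = cu then a else b := by
  have tri : ∀ p q r : Fin 2, p ≠ q → ¬(q = r) → p = r := by decide
  have tri2 : ∀ p q r : Fin 2, p ≠ q → q = r → ¬(p = r) := by decide
  intro y w q
  induction q with
  | nil =>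
    intro hw hcu x h _
    subst hw
    rw [if_neg (hcu ▸ (hc h))]
    have := hu h.symm
    rwa [Sym2.eq_swap] at this
  | cons h2 q2 ih =>
    intro hw hcu x h hp
    subst hw
    have hp2 : (SimpleGraph.Walk.cons h2 q2).IsPath := hp.of_cons
    have ihv := ih rfl hcu _ h2 hp2
    rename_i y' z' _
    have hxz : x ≠ z' := by
      intro hxz
      subst hxz
      have := hp.2
      simp [SimpleGraph.Walk.support_cons] at this
    have hne := hprop h h2 hxz
    have h1 := hcol h
    have hxy : c x ≠ c y' := hc h
    by_cases hcy : c y' = cu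
    · rw [if_pos hcy] at ihv
      rw [if_neg (tri2 _ _ _ hxy hcy)]
      rcases h1 with h1 | h1
      · rw [h1, ihv] at hne; exact absurd rfl hne
      · exact h1
    · rw [if_neg hcy] at ihv
      rw [if_pos (tri _ _ _ hxy hcy)]
      rcases h1 with h1 | h1
      · exact h1
      · rw [h1, ihv] at hne; exact absurd rfl hne

lemma kempe_unreach {V : Type*} (H : SimpleGraph V) (c : V → Fin 2)
    (hc : ∀ {x y}, H.Adj x y → c x ≠ c y)
    (col : Sym2 V → ℕ) (a b : ℕ)
    (hprop : ∀ {x y z : V}, H.Adj x y → H.Adj y z → x ≠ z → col s(x,y) ≠ col s(y,z))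
    (hcol : ∀ {x y}, H.Adj x y → col s(x,y) = a ∨ col s(x,y) = b)
    (u v : V) (hu : ∀ {x}, H.Adj u x → col s(u,x) = b)
    (hv : ∀ {x}, H.Adj v x → col s(v,x) ≠ b)
    (hcuv : ¬ (c v = c u)) (huv : v ≠ u) : ¬ H.Reachable u v := by
  classical
  intro hr
  obtain ⟨p⟩ := hr.symm
  obtain ⟨q, hq⟩ : ∃ q : H.Walk v u, q.IsPath := ⟨p.toPath, p.toPath.2⟩
  cases q with
  | nil => exact huv rfl
  | cons h q2 =>
    have := kempe_aux H c @hc col a b @hprop @hcol u @hu (c u) _ _ q2 rfl rfl v h hq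
    rw [if_neg hcuv] at this
    exact hv h this

lemma missing_color {V : Type*} [Fintype V] (G : SimpleGraph V) [DecidableRel G.Adj]
    [DecidableEq V]
    (C : Sym2 V → ℕ) (E : Finset (Sym2 V)) (hE : ↑E ⊆ G.edgeSet)
    (u v : V) (huv : G.Adj u v) (he : s(u,v) ∉ E) :
    ∃ a < G.maxDegree, ∀ f ∈ E, u ∈ f → C f ≠ a := by
  classical
  set tu := E.filter (fun f => u ∈ f) with htu
  have hsub : tu ⊆ (G.incidenceFinset u).erase s(u,v) := by
    intro f hf
    rw [Finset.mem_filter] at hf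
    refine Finset.mem_erase.2 ⟨?_, ?_⟩
    · rintro rfl; exact he hf.1
    · rw [SimpleGraph.mem_incidenceFinset]
      exact ⟨hE hf.1, hf.2⟩
  have hdeg : 0 < G.degree u := (G.degree_pos_iff_exists_adj u).2 ⟨v, huv⟩
  have hcard : tu.card < G.maxDegree := by
    have h1 := Finset.card_le_card hsub
    have h2 : ((G.incidenceFinset u).erase s(u,v)).card = G.degree u - 1 := by
      rw [Finset.card_erase_of_mem, G.card_incidenceFinset_eq_degree]
      rw [SimpleGraph.mem_incidenceFinset]
      exact ⟨huv, Sym2.mem_mk_left u v⟩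
    have h3 := G.degree_le_maxDegree u
    omega
  have himg : (tu.image C).card < (Finset.range G.maxDegree).card := by
    have := Finset.card_image_le (s := tu) (f := C)
    rw [Finset.card_range]; omega
  obtain ⟨a, ha, hna⟩ := Finset.not_subset.1 (fun hss =>
    absurd (Finset.card_le_card (s := Finset.range G.maxDegree) (t := tu.image C) hss) (by omega))
  refine ⟨a, Finset.mem_range.1 ha, ?_⟩
  intro f hf hufm hCa
  exact hna (Finset.mem_image.2 ⟨f, by rw [htu, Finset.mem_filter]; exact ⟨hf, hufm⟩, hCa⟩)

lemma konig_main {V : Type*} [Fintype V] (G : SimpleGraph V) [DecidableRel G.Adj]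
    (c : V → Fin 2) (hc : ∀ {x y}, G.Adj x y → c x ≠ c y) :
    ∀ (E : Finset (Sym2 V)), ↑E ⊆ G.edgeSet →
      ∃ C : Sym2 V → ℕ, (∀ f ∈ E, C f < G.maxDegree) ∧
        (∀ f ∈ E, ∀ g ∈ E, f ≠ g → EdgesAdj f g → C f ≠ C g) := by
  classical
  intro E
  induction E using Finset.induction_on with
  | empty => exact fun _ => ⟨fun _ => 0, by simp, by simp⟩
  | @insert e E he ih =>
    induction e using Sym2.ind with
    | _ u v =>
    intro hsub
    have hE : ↑E ⊆ G.edgeSet := fun f hf => hsub (Finset.mem_coe.2 (Finset.mem_insert_of_mem hf))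
    obtain ⟨C, hlt, hprop⟩ := ih hE
    have huv : G.Adj u v := (SimpleGraph.mem_edgeSet G).1 (hsub (Finset.mem_coe.2 (Finset.mem_insert_self _ _)))
    obtain ⟨a, haΔ, hau⟩ := missing_color G C E hE u v huv he
    obtain ⟨b, hbΔ, hbv⟩ := missing_color G C E hE v u huv.symm (by rwa [Sym2.eq_swap])
    by_cases hav : ∀ f ∈ E, v ∈ f → C f ≠ a
    · -- a is missing at both u and v
      refine ⟨fun f => if f = s(u,v) then a else C f, ?_, ?_⟩
      · intro f hf
        dsimp only
        by_cases hfe : f = s(u,v)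
        · simpa [hfe] using haΔ
        · rw [if_neg hfe]
          exact hlt f ((Finset.mem_insert.1 hf).resolve_left hfe)
      · intro f hf g hg hfg ⟨w, hwf, hwg⟩
        dsimp only
        rcases Finset.mem_insert.1 hf with rfl | hfE <;>
          rcases Finset.mem_insert.1 hg with rfl | hgE
        · exact absurd rfl hfg
        · rw [if_pos rfl, if_neg (fun h : g = s(u,v) => he (h ▸ hgE))]
          rcases Sym2.mem_iff.1 hwf with rfl | rfl
          · exact fun h => hau g hgE hwg h.symm
          · exact fun h => hav g hgE hwg h.symm
        · rw [if_pos rfl, if_neg (fun h : f = s(u,v) => he (h ▸ hfE))]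
          rcases Sym2.mem_iff.1 hwg with rfl | rfl
          · exact hau f hfE hwf
          · exact hav f hfE hwf
        · rw [if_neg (fun h : f = s(u,v) => he (h ▸ hfE)), if_neg (fun h : g = s(u,v) => he (h ▸ hgE))]
          exact hprop f hfE g hgE hfg ⟨w, hwf, hwg⟩
    · -- Kempe chain case
      push_neg at hav
      obtain ⟨f0, hf0E, hf0v, hf0a⟩ := hav
      have hab : a ≠ b := fun h => hbv f0 hf0E hf0v (h ▸ hf0a)
      set H : SimpleGraph V :=
        SimpleGraph.fromRel (fun x y => s(x,y) ∈ E ∧ (C s(x,y) = a ∨ C s(x,y) = b)) with hH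
      have hHadj : ∀ {x y : V}, H.Adj x y → s(x,y) ∈ E ∧ (C s(x,y) = a ∨ C s(x,y) = b) := by
        intro x y h
        rw [hH, SimpleGraph.fromRel_adj] at h
        rcases h.2 with h' | h'
        · exact h'
        · rwa [Sym2.eq_swap]
      have hHG : ∀ {x y : V}, H.Adj x y → G.Adj x y := by
        intro x y h
        exact (SimpleGraph.mem_edgeSet G).1 (hE (Finset.mem_coe.2 (hHadj h).1))
      have hHc : ∀ {x y : V}, H.Adj x y → c x ≠ c y := fun h => hc (hHG h)
      have hprop' : ∀ {x y z : V}, H.Adj x y → H.Adj y z → x ≠ z →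
          C s(x,y) ≠ C s(y,z) := by
        intro x y z h1 h2 hxz
        have hne : s(x,y) ≠ s(y,z) := by
          intro hq
          rcases Sym2.eq_iff.mp hq with ⟨rfl, rfl⟩ | ⟨rfl, -⟩
          · exact h1.ne rfl
          · exact hxz rfl
        exact hprop _ (hHadj h1).1 _ (hHadj h2).1 hne ⟨y, by simp, by simp⟩
      have hcol' : ∀ {x y : V}, H.Adj x y → C s(x,y) = a ∨ C s(x,y) = b :=
        fun h => (hHadj h).2
      have hu' : ∀ {x : V}, H.Adj u x → C s(u,x) = b := by
        intro x h
        rcases (hHadj h).2 with h' | h'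
        · exact absurd h' (hau _ (hHadj h).1 (Sym2.mem_mk_left u x))
        · exact h'
      have hv' : ∀ {x : V}, H.Adj v x → C s(v,x) ≠ b := by
        intro x h
        exact hbv _ (hHadj h).1 (Sym2.mem_mk_left v x)
      have hunreach : ¬ H.Reachable u v :=
        kempe_unreach H c @hHc C a b @hprop' @hcol' u v @hu' @hv'
          (Ne.symm (hc huv)) (huv.ne')
      -- edges of H connect reachable vertices
      have hstep : ∀ f ∈ E, (C f = a ∨ C f = b) → ∀ w ∈ f,
          ((∃ x ∈ f, H.Reachable u x) ↔ H.Reachable u w) := by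
        intro f hf hfab
        induction f using Sym2.ind with
        | _ p q =>
        have hpq : p ≠ q := ((SimpleGraph.mem_edgeSet G).1 (hE (Finset.mem_coe.2 hf))).ne
        have hHpq : H.Adj p q := by
          rw [hH, SimpleGraph.fromRel_adj]
          exact ⟨hpq, Or.inl ⟨hf, hfab⟩⟩
        intro w hw
        constructor
        · rintro ⟨x, hx, hr⟩
          rcases Sym2.mem_iff.1 hx with rfl | rfl <;> rcases Sym2.mem_iff.1 hw with rfl | rfl
          · exact hr
          · exact hr.trans hHpq.reachable
          · exact hr.trans hHpq.symm.reachable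
          · exact hr
        · intro hr
          exact ⟨w, hw, hr⟩
      set C2 : Sym2 V → ℕ := fun f =>
        if f ∈ E ∧ (C f = a ∨ C f = b) ∧ (∃ x ∈ f, H.Reachable u x)
        then (if C f = a then b else a) else C f with hC2
      have hC2lt : ∀ f ∈ E, C2 f < G.maxDegree := by
        intro f hf
        simp only [hC2]
        by_cases hcond : f ∈ E ∧ (C f = a ∨ C f = b) ∧ (∃ x ∈ f, H.Reachable u x)
        · rw [if_pos hcond]; split <;> omega
        · rw [if_neg hcond]; exact hlt f hf
      have hC2prop : ∀ f ∈ E, ∀ g ∈ E, f ≠ g → EdgesAdj f g → C2 f ≠ C2 g := by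
        intro f hf g hg hfg ⟨w, hwf, hwg⟩
        have hold : C f ≠ C g := hprop f hf g hg hfg ⟨w, hwf, hwg⟩
        simp only [hC2]
        by_cases hfab : C f = a ∨ C f = b <;> by_cases hgab : C g = a ∨ C g = b
        · by_cases hw : H.Reachable u w
          · have hcf : f ∈ E ∧ (C f = a ∨ C f = b) ∧ (∃ x ∈ f, H.Reachable u x) := ⟨hf, hfab, (hstep f hf hfab w hwf).2 hw⟩
            have hcg : g ∈ E ∧ (C g = a ∨ C g = b) ∧ (∃ x ∈ g, H.Reachable u x) := ⟨hg, hgab, (hstep g hg hgab w hwg).2 hw⟩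
            rw [if_pos hcf, if_pos hcg]
            rcases hfab with h1 | h1 <;> rcases hgab with h2 | h2
            · exact absurd (h1.trans h2.symm) hold
            · rw [if_pos h1, if_neg (fun hh => hab (h2.symm.trans hh).symm)]
              exact Ne.symm hab
            · rw [if_neg (fun hh => hab (h1.symm.trans hh).symm), if_pos h2]
              exact hab
            · exact absurd (h1.trans h2.symm) hold
          · rw [if_neg, if_neg]
            · exact hold
            · exact fun h : g ∈ E ∧ (C g = a ∨ C g = b) ∧ (∃ x ∈ g, H.Reachable u x) => hw ((hstep g hg h.2.1 w hwg).1 h.2.2)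
            · exact fun h : f ∈ E ∧ (C f = a ∨ C f = b) ∧ (∃ x ∈ f, H.Reachable u x) => hw ((hstep f hf h.2.1 w hwf).1 h.2.2)
        · rw [if_neg (fun h : g ∈ E ∧ (C g = a ∨ C g = b) ∧ (∃ x ∈ g, H.Reachable u x) => hgab h.2.1)]
          by_cases hcond : f ∈ E ∧ (C f = a ∨ C f = b) ∧ (∃ x ∈ f, H.Reachable u x)
          · rw [if_pos hcond]
            split
            · exact fun h => hgab (Or.inr h.symm)
            · exact fun h => hgab (Or.inl h.symm)
          · rw [if_neg hcond]; exact hold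
        · rw [if_neg (fun h : f ∈ E ∧ (C f = a ∨ C f = b) ∧ (∃ x ∈ f, H.Reachable u x) => hfab h.2.1)]
          by_cases hcond : g ∈ E ∧ (C g = a ∨ C g = b) ∧ (∃ x ∈ g, H.Reachable u x)
          · rw [if_pos hcond]
            split
            · exact fun h => hfab (Or.inr h)
            · exact fun h => hfab (Or.inl h)
          · rw [if_neg hcond]; exact hold
        · rw [if_neg (fun h : f ∈ E ∧ (C f = a ∨ C f = b) ∧ (∃ x ∈ f, H.Reachable u x) => hfab h.2.1), if_neg (fun h : g ∈ E ∧ (C g = a ∨ C g = b) ∧ (∃ x ∈ g, H.Reachable u x) => hgab h.2.1)]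
          exact hold
      have hbu2 : ∀ f ∈ E, u ∈ f → C2 f ≠ b := by
        intro f hf hufm
        simp only [hC2]
        rcases eq_or_ne (C f) a with hfa | hfa
        · exact absurd hfa (hau f hf hufm)
        · rcases eq_or_ne (C f) b with hfb | hfb
          · rw [if_pos ⟨hf, Or.inr hfb, u, hufm, SimpleGraph.Reachable.refl u⟩, if_neg hfa]
            exact hab
          · rw [if_neg (fun h : f ∈ E ∧ (C f = a ∨ C f = b) ∧ (∃ x ∈ f, H.Reachable u x) => h.2.1.elim hfa hfb)]
            exact hfb
      have hbv2 : ∀ f ∈ E, v ∈ f → C2 f ≠ b := by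
        intro f hf hvfm
        simp only [hC2]
        rcases eq_or_ne (C f) b with hfb | hfb
        · exact absurd hfb (hbv f hf hvfm)
        · rcases eq_or_ne (C f) a with hfa | hfa
          · rw [if_neg (fun h : f ∈ E ∧ (C f = a ∨ C f = b) ∧ (∃ x ∈ f, H.Reachable u x) => hunreach ((hstep f hf h.2.1 v hvfm).1 h.2.2))]
            exact hfb
          · rw [if_neg (fun h : f ∈ E ∧ (C f = a ∨ C f = b) ∧ (∃ x ∈ f, H.Reachable u x) => h.2.1.elim hfa hfb)]
            exact hfb
      refine ⟨fun f => if f = s(u,v) then b else C2 f, ?_, ?_⟩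
      · intro f hf
        dsimp only
        by_cases hfe : f = s(u,v)
        · simpa [hfe] using hbΔ
        · rw [if_neg hfe]
          exact hC2lt f ((Finset.mem_insert.1 hf).resolve_left hfe)
      · intro f hf g hg hfg ⟨w, hwf, hwg⟩
        dsimp only
        rcases Finset.mem_insert.1 hf with rfl | hfE <;>
          rcases Finset.mem_insert.1 hg with rfl | hgE
        · exact absurd rfl hfg
        · rw [if_pos rfl, if_neg (fun h : g = s(u,v) => he (h ▸ hgE))]
          rcases Sym2.mem_iff.1 hwf with rfl | rfl
          · exact fun h => hbu2 g hgE hwg h.symm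
          · exact fun h => hbv2 g hgE hwg h.symm
        · rw [if_pos rfl, if_neg (fun h : f = s(u,v) => he (h ▸ hfE))]
          rcases Sym2.mem_iff.1 hwg with rfl | rfl
          · exact hbu2 f hfE hwf
          · exact hbv2 f hfE hwf
        · rw [if_neg (fun h : f = s(u,v) => he (h ▸ hfE)), if_neg (fun h : g = s(u,v) => he (h ▸ hgE))]
          exact hC2prop f hfE g hgE hfg ⟨w, hwf, hwg⟩

theorem stmt_7' {V : Type*} [Fintype V] (G : SimpleGraph V) [DecidableRel G.Adj]
    (hbip : G.Colorable 2) :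
    sInf {n | ∃ C : G.edgeSet → Fin n,
      ∀ e f : G.edgeSet, e ≠ f → EdgesAdj (e : Sym2 V) (f : Sym2 V) → C e ≠ C f} = G.maxDegree := by
  classical
  obtain ⟨c⟩ := hbip
  obtain ⟨C, hlt, hprop⟩ := konig_main G c (fun h => c.valid h) G.edgeFinset
    (by rw [Set.subset_def]; intro f hf; exact (G.mem_edgeFinset).1 hf)
  have hmem : G.maxDegree ∈ {n | ∃ C : G.edgeSet → Fin n,
      ∀ e f : G.edgeSet, e ≠ f → EdgesAdj (e : Sym2 V) (f : Sym2 V) → C e ≠ C f} := by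
    refine ⟨fun e => ⟨C e, hlt e ((G.mem_edgeFinset).2 e.2)⟩, ?_⟩
    intro e f hef hadj hCeq
    exact hprop e ((G.mem_edgeFinset).2 e.2) f ((G.mem_edgeFinset).2 f.2)
      (fun h => hef (Subtype.ext h)) hadj (by
        simpa using congrArg Fin.val hCeq)
  refine le_antisymm (Nat.sInf_le hmem) (le_csInf ⟨_, hmem⟩ ?_)
  rintro n ⟨Cn, hCn⟩
  rcases Nat.eq_zero_or_pos G.maxDegree with hΔ | hΔ
  · omega
  · have hV : Nonempty V := by
      by_contra h
      rw [not_nonempty_iff] at h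
      simp only [SimpleGraph.maxDegree, Finset.univ_eq_empty, Finset.image_empty,
        Finset.max_empty] at hΔ
      exact Nat.lt_irrefl 0 hΔ
    obtain ⟨v, hv⟩ := G.exists_maximal_degree_vertex
    have hdegpos : 0 < G.degree v := by omega
    obtain ⟨w, hw⟩ := (G.degree_pos_iff_exists_adj v).1 hdegpos
    have he0 : s(v,w) ∈ G.edgeSet := (SimpleGraph.mem_edgeSet G).2 hw
    have hinj : Set.InjOn (fun e : Sym2 V => if h : e ∈ G.edgeSet then Cn ⟨e, h⟩ else Cn ⟨_, he0⟩)
        ↑(G.incidenceFinset v) := by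
      intro e hem f hfm hef
      by_contra hne
      rw [Finset.mem_coe, SimpleGraph.mem_incidenceFinset] at hem hfm
      have heE : e ∈ G.edgeSet := hem.1
      have hfE : f ∈ G.edgeSet := hfm.1
      have hve : v ∈ e := hem.2
      have hvf : v ∈ f := hfm.2
      have := hCn ⟨e, heE⟩ ⟨f, hfE⟩ (fun h => hne (congrArg Subtype.val h)) ⟨v, hve, hvf⟩
      dsimp only at hef
      rw [dif_pos heE, dif_pos hfE] at hef
      exact this hef
    have hcard := Finset.card_le_card_of_injOn
      (f := fun e : Sym2 V => if h : e ∈ G.edgeSet then Cn ⟨e, h⟩ else Cn ⟨_, he0⟩)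
      (fun e _ => Finset.mem_univ _) hinj
    rw [G.card_incidenceFinset_eq_degree, Finset.card_univ, Fintype.card_fin] at hcard
    omega


/-- König's edge coloring theorem: a bipartite graph has chromatic index equal
to its maximum degree. -/
theorem stmt_7 {V : Type*} [Fintype V] (G : SimpleGraph V) [DecidableRel G.Adj]
    (hbip : G.Colorable 2) : chromIndex G = G.maxDegree := by
  unfold chromIndex IsProperEdgeColoring'
  exact stmt_7' G hbip
end

section
/- Let G be a bipartite graph with maximum degree Δ. Suppose each edge of G is given a list of colors of size at least Δ. Then G has a proper edge coloring in which each edge receives a color from its list (list chromatic index of a bipartite graph equals its maximum degree). -/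
open SimpleGraph

namespace Galvin

variable {V : Type*} [DecidableEq V]

/-- Properness of an edge coloring on a finset of oriented pairs:
pairs sharing a first or second coordinate get distinct colors. -/
def Proper (F : Finset (V × V)) (c : V × V → ℕ) : Prop :=
  ∀ p ∈ F, ∀ q ∈ F, p ≠ q → (p.1 = q.1 ∨ p.2 = q.2) → c p ≠ c q

lemma Proper.mono {F F' : Finset (V × V)} {c : V × V → ℕ}
    (h : Proper F c) (hs : F' ⊆ F) : Proper F' c :=
  fun p hp q hq => h p (hs hp) q (hs hq)

/-- Kempe-chain swap: if color `α` is missing at the left vertex `x`, we can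
recolor (only flipping colors `α ↔ β` along the chain) so that `β` is missing
at `x`, without touching edges at any right vertex that misses `β`. -/
lemma swapl (α β : ℕ) : ∀ (n : ℕ) (P : Finset (V × V)), P.card ≤ n →
    ∀ (c : V × V → ℕ) (x : V), Proper P c → (∀ p ∈ P, p.1 = x → c p ≠ α) →
    ∃ c' : V × V → ℕ, Proper P c' ∧ (∀ p ∈ P, p.1 = x → c' p ≠ β) ∧
      (∀ p, c' p = c p ∨ (c p = α ∧ c' p = β) ∨ (c p = β ∧ c' p = α)) ∧
      (∀ w, (∀ p ∈ P, p.2 = w → c p ≠ β) → (∀ p ∈ P, p.2 = w → c' p = c p)) := by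
  intro n
  induction n with
  | zero =>
    intro P hcard c x hprop hmiss
    have hP : P = ∅ := Finset.card_eq_zero.mp (Nat.le_zero.mp hcard)
    subst hP
    exact ⟨c, hprop, by simp, fun p => Or.inl rfl, fun w _ p hp => absurd hp (by simp)⟩
  | succ n ih =>
    intro P hcard c x hprop hmiss
    by_cases hβ : ∃ e ∈ P, e.1 = x ∧ c e = β
    · obtain ⟨e₁, he₁P, he₁x, he₁β⟩ := hβ
      have hαβ : α ≠ β := fun h => hmiss e₁ he₁P he₁x (h ▸ he₁β)
      by_cases hα2 : ∃ e ∈ P.erase e₁, e.2 = e₁.2 ∧ c e = α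
      · -- recursive case: continue the chain through e₂
        obtain ⟨e₂, he₂P', he₂y, he₂α⟩ := hα2
        have he₂ne : e₂ ≠ e₁ := (Finset.mem_erase.mp he₂P').1
        have he₂P : e₂ ∈ P := (Finset.mem_erase.mp he₂P').2
        have hx₂ne : e₂.1 ≠ x := fun h => hmiss e₂ he₂P h he₂α
        set Q : Finset (V × V) := (P.erase e₁).erase e₂ with hQ
        have hQsub : Q ⊆ P := (Finset.erase_subset _ _).trans (Finset.erase_subset _ _)
        have hQcard : Q.card ≤ n := by
          have h1 : Q.card ≤ (P.erase e₁).card := Finset.card_le_card (Finset.erase_subset _ _)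
          have h2 : (P.erase e₁).card = P.card - 1 := Finset.card_erase_of_mem he₁P
          omega
        have hQprop : Proper Q c := hprop.mono hQsub
        have hQmem : ∀ p ∈ Q, p ≠ e₁ ∧ p ≠ e₂ := fun p hp =>
          ⟨(Finset.mem_erase.mp (Finset.mem_erase.mp hp).2).1, (Finset.mem_erase.mp hp).1⟩
        have hQmiss : ∀ p ∈ Q, p.1 = e₂.1 → c p ≠ α := by
          intro p hp hp1 hpα
          exact hprop p (hQsub hp) e₂ he₂P (hQmem p hp).2 (Or.inl hp1) (hpα.trans he₂α.symm)
        obtain ⟨c'', h1, h2, h3, h4⟩ := ih Q hQcard c e₂.1 hQprop hQmiss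
        have flipsfix : ∀ p, c p ≠ α → c p ≠ β → c'' p = c p := by
          intro p hpα hpβ
          rcases h3 p with h | ⟨h, _⟩ | ⟨h, _⟩
          · exact h
          · exact absurd h hpα
          · exact absurd h hpβ
        -- edges of Q at y₁ := e₁.2 have colors ∉ {α, β} and are untouched
        have noβQy : ∀ p ∈ Q, p.2 = e₁.2 → c p ≠ β := by
          intro p hp hp2 hpβ
          exact hprop p (hQsub hp) e₁ he₁P (hQmem p hp).1 (Or.inr hp2) (hpβ.trans he₁β.symm)
        have noαQy : ∀ p ∈ Q, p.2 = e₁.2 → c p ≠ α := by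
          intro p hp hp2 hpα
          exact hprop p (hQsub hp) e₂ he₂P (hQmem p hp).2 (Or.inr (hp2.trans he₂y.symm))
            (hpα.trans he₂α.symm)
        have c''y : ∀ p ∈ Q, p.2 = e₁.2 → c'' p = c p := h4 e₁.2 noβQy
        -- edges of Q at x have colors ∉ {α, β} and hence are untouched
        have noβQx : ∀ p ∈ Q, p.1 = x → c p ≠ β := by
          intro p hp hp1 hpβ
          exact hprop p (hQsub hp) e₁ he₁P (hQmem p hp).1 (Or.inl (hp1.trans he₁x.symm))
            (hpβ.trans he₁β.symm)
        have c''x : ∀ p ∈ Q, p.1 = x → c'' p = c p := fun p hp hp1 =>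
          flipsfix p (hmiss p (hQsub hp) hp1) (noβQx p hp hp1)
        set c' : V × V → ℕ := Function.update (Function.update c'' e₂ β) e₁ α with hc'
        have hc'e₁ : c' e₁ = α := Function.update_self _ _ _
        have hc'e₂ : c' e₂ = β := by
          rw [hc', Function.update_of_ne he₂ne, Function.update_self]
        have hc'Q : ∀ p, p ≠ e₁ → p ≠ e₂ → c' p = c'' p := by
          intro p h1' h2'
          rw [hc', Function.update_of_ne h1', Function.update_of_ne h2']
        -- membership of P decomposes
        have hdecomp : ∀ p ∈ P, p = e₁ ∨ p = e₂ ∨ p ∈ Q := by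
          intro p hp
          by_cases h1' : p = e₁
          · exact Or.inl h1'
          by_cases h2' : p = e₂
          · exact Or.inr (Or.inl h2')
          · exact Or.inr (Or.inr (Finset.mem_erase.mpr ⟨h2', Finset.mem_erase.mpr ⟨h1', hp⟩⟩))
        have claim1 : ∀ q ∈ P, q ≠ e₁ → (e₁.1 = q.1 ∨ e₁.2 = q.2) → c' q ≠ α := by
          intro q hq hqne hadj
          rcases hdecomp q hq with h | h | h
          · exact absurd h hqne
          · subst h; rw [hc'e₂]; exact fun hh => hαβ hh.symm
          · rw [hc'Q q (hQmem q h).1 (hQmem q h).2]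
            rcases hadj with ha | ha
            · rw [c''x q h (ha.symm.trans he₁x)]
              exact hmiss q (hQsub h) (ha.symm.trans he₁x)
            · rw [c''y q h ha.symm]
              exact noαQy q h ha.symm
        have claim2 : ∀ q ∈ P, q ≠ e₂ → (e₂.1 = q.1 ∨ e₂.2 = q.2) → c' q ≠ β := by
          intro q hq hqne hadj
          rcases hdecomp q hq with h | h | h
          · subst h; rw [hc'e₁]; exact hαβ
          · exact absurd h hqne
          · rw [hc'Q q (hQmem q h).1 (hQmem q h).2]
            rcases hadj with ha | ha
            · exact h2 q h ha.symm
            · rw [c''y q h (ha.symm.trans he₂y)]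
              exact noβQy q h (ha.symm.trans he₂y)
        refine ⟨c', ?_, ?_, ?_, ?_⟩
        · -- properness
          intro p hp q hq hne hadj
          rcases hdecomp p hp with h | h | h
          · subst h; rw [hc'e₁]
            exact fun hh => claim1 q hq (fun e => hne e.symm) hadj hh.symm
          · subst h; rw [hc'e₂]
            exact fun hh => claim2 q hq (fun e => hne e.symm) hadj hh.symm
          · rcases hdecomp q hq with h' | h' | h'
            · subst h'
              rw [hc'e₁]
              have := claim1 p hp hne (by rcases hadj with a | a; exacts [Or.inl a.symm, Or.inr a.symm])
              exact this
            · subst h'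
              rw [hc'e₂]
              have := claim2 p hp hne (by rcases hadj with a | a; exacts [Or.inl a.symm, Or.inr a.symm])
              exact this
            · rw [hc'Q p (hQmem p h).1 (hQmem p h).2, hc'Q q (hQmem q h').1 (hQmem q h').2]
              exact h1 p h q h' hne hadj
        · -- β missing at x
          intro p hp hp1
          rcases hdecomp p hp with h | h | h
          · subst h; rw [hc'e₁]; exact hαβ
          · subst h; exact absurd hp1 hx₂ne
          · rw [hc'Q p (hQmem p h).1 (hQmem p h).2, c''x p h hp1]
            exact noβQx p h hp1
        · -- flips only
          intro p
          by_cases h1' : p = e₁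
          · subst h1'; rw [hc'e₁]; exact Or.inr (Or.inr ⟨he₁β, rfl⟩)
          by_cases h2' : p = e₂
          · subst h2'; rw [hc'e₂]; exact Or.inr (Or.inl ⟨he₂α, rfl⟩)
          · rw [hc'Q p h1' h2']; exact h3 p
        · -- right vertices missing β untouched
          intro w hw p hp hp2
          have hwy : w ≠ e₁.2 := by
            intro h
            exact hw e₁ he₁P h.symm he₁β
          have hpne₁ : p ≠ e₁ := fun h => hwy (by rw [← hp2, h])
          have hpne₂ : p ≠ e₂ := by
            intro h
            apply hwy
            rw [← hp2, h, he₂y]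
          have hpQ : p ∈ Q := by
            rcases hdecomp p hp with h | h | h
            · exact absurd h hpne₁
            · exact absurd h hpne₂
            · exact h
          rw [hc'Q p hpne₁ hpne₂]
          exact h4 w (fun q hq hq2 => hw q (hQsub hq) hq2) p hpQ hp2
      · -- terminal case: recolor e₁ with α
        push_neg at hα2
        set c' : V × V → ℕ := Function.update c e₁ α with hc'
        have hc'e₁ : c' e₁ = α := Function.update_self _ _ _
        have hc'ne : ∀ p, p ≠ e₁ → c' p = c p := fun p h => Function.update_of_ne h _ _
        have claim1 : ∀ q ∈ P, q ≠ e₁ → (e₁.1 = q.1 ∨ e₁.2 = q.2) → c q ≠ α := by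
          intro q hq hqne hadj
          rcases hadj with ha | ha
          · exact hmiss q hq (ha.symm.trans he₁x)
          · exact hα2 q (Finset.mem_erase.mpr ⟨hqne, hq⟩) ha.symm
        refine ⟨c', ?_, ?_, ?_, ?_⟩
        · intro p hp q hq hne hadj
          by_cases h1' : p = e₁
          · have h2' : q ≠ e₁ := fun e => hne (h1'.trans e.symm)
            rw [h1', hc'e₁, hc'ne q h2']
            have hadj' : e₁.1 = q.1 ∨ e₁.2 = q.2 := by rw [← h1']; exact hadj
            exact fun hh => claim1 q hq h2' hadj' hh.symm
          by_cases h2' : q = e₁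
          · rw [h2', hc'e₁, hc'ne p h1']
            exact claim1 p hp h1'
              (by rw [← h2']; rcases hadj with a | a; exacts [Or.inl a.symm, Or.inr a.symm])
          · rw [hc'ne p h1', hc'ne q h2']
            exact hprop p hp q hq hne hadj
        · intro p hp hp1
          by_cases h1' : p = e₁
          · rw [h1', hc'e₁]; exact hαβ
          · rw [hc'ne p h1']
            intro hpβ
            exact hprop p hp e₁ he₁P h1' (Or.inl (hp1.trans he₁x.symm)) (hpβ.trans he₁β.symm)
        · intro p
          by_cases h1' : p = e₁
          · rw [h1', hc'e₁]; exact Or.inr (Or.inr ⟨h1' ▸ he₁β, rfl⟩)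
          · rw [hc'ne p h1']; exact Or.inl rfl
        · intro w hw p hp hp2
          have hpne₁ : p ≠ e₁ := by
            intro h
            exact hw e₁ he₁P (by rw [← hp2, h]) he₁β
          exact hc'ne p hpne₁
    · -- β already missing at x
      push_neg at hβ
      exact ⟨c, hprop, fun p hp hp1 => hβ p hp hp1, fun p => Or.inl rfl, fun w _ p _ _ => rfl⟩


lemma exists_missing (S : Finset (V × V)) (c : V × V → ℕ) (Δ : ℕ) (h : S.card < Δ) :
    ∃ α < Δ, ∀ p ∈ S, c p ≠ α := by
  have hlt : (S.image c).card < (Finset.range Δ).card := by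
    calc (S.image c).card ≤ S.card := Finset.card_image_le
    _ < Δ := h
    _ = (Finset.range Δ).card := (Finset.card_range Δ).symm
  have hns : ¬ (Finset.range Δ ⊆ S.image c) :=
    fun hsub => absurd (Finset.card_le_card hsub) (not_le.mpr hlt)
  obtain ⟨α, hα1, hα2⟩ := Finset.not_subset.mp hns
  refine ⟨α, Finset.mem_range.mp hα1, fun p hp hc => hα2 ?_⟩
  exact Finset.mem_image.mpr ⟨p, hp, hc⟩

/-- König's edge coloring theorem on oriented pairs: a "bipartite graph" with
left and right degrees at most `Δ` has a proper edge coloring with `Δ` colors. -/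
lemma koenig : ∀ (n : ℕ) (P : Finset (V × V)), P.card ≤ n → ∀ (Δ : ℕ),
    (∀ v, (P.filter (fun p => p.1 = v)).card ≤ Δ) →
    (∀ v, (P.filter (fun p => p.2 = v)).card ≤ Δ) →
    ∃ c : V × V → ℕ, Proper P c ∧ ∀ p ∈ P, c p < Δ := by
  intro n
  induction n with
  | zero =>
    intro P hcard Δ _ _
    have hP : P = ∅ := Finset.card_eq_zero.mp (Nat.le_zero.mp hcard)
    subst hP
    exact ⟨fun _ => 0, fun p hp => absurd hp (by simp), fun p hp => absurd hp (by simp)⟩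
  | succ n ih =>
    intro P hcard Δ hdX hdY
    rcases P.eq_empty_or_nonempty with hP | ⟨p₀, hp₀⟩
    · subst hP
      exact ⟨fun _ => 0, fun p hp => absurd hp (by simp), fun p hp => absurd hp (by simp)⟩
    set P' : Finset (V × V) := P.erase p₀ with hP'
    have hP'sub : P' ⊆ P := Finset.erase_subset _ _
    have hP'card : P'.card ≤ n := by
      have h1 : P'.card = P.card - 1 := Finset.card_erase_of_mem hp₀
      have h2 : 0 < P.card := Finset.card_pos.mpr ⟨p₀, hp₀⟩
      omega
    obtain ⟨c, hcprop, hclt⟩ := ih P' hP'card Δ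
      (fun v => le_trans (Finset.card_le_card (Finset.filter_subset_filter _ hP'sub)) (hdX v))
      (fun v => le_trans (Finset.card_le_card (Finset.filter_subset_filter _ hP'sub)) (hdY v))
    -- a color `α` missing at the left end of `p₀`, and `β` missing at the right end
    have hmemX : p₀ ∈ P.filter (fun p => p.1 = p₀.1) := Finset.mem_filter.mpr ⟨hp₀, rfl⟩
    have hmemY : p₀ ∈ P.filter (fun p => p.2 = p₀.2) := Finset.mem_filter.mpr ⟨hp₀, rfl⟩
    obtain ⟨α, hαΔ, hαmiss⟩ := exists_missing (P'.filter (fun p => p.1 = p₀.1)) c Δ (by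
      rw [hP', Finset.filter_erase, Finset.card_erase_of_mem hmemX]
      have h1 := hdX p₀.1
      have h2 := Finset.card_pos.mpr ⟨p₀, hmemX⟩
      omega)
    obtain ⟨β, hβΔ, hβmiss⟩ := exists_missing (P'.filter (fun p => p.2 = p₀.2)) c Δ (by
      rw [hP', Finset.filter_erase, Finset.card_erase_of_mem hmemY]
      have h1 := hdY p₀.2
      have h2 := Finset.card_pos.mpr ⟨p₀, hmemY⟩
      omega)
    have hαmiss' : ∀ p ∈ P', p.1 = p₀.1 → c p ≠ α :=
      fun p hp h1 => hαmiss p (Finset.mem_filter.mpr ⟨hp, h1⟩)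
    have hβmiss' : ∀ p ∈ P', p.2 = p₀.2 → c p ≠ β :=
      fun p hp h1 => hβmiss p (Finset.mem_filter.mpr ⟨hp, h1⟩)
    obtain ⟨c'', h1, h2, h3, h4⟩ := swapl α β P'.card P' le_rfl c p₀.1 hcprop hαmiss'
    have hc''lt : ∀ p ∈ P', c'' p < Δ := by
      intro p hp
      rcases h3 p with h | ⟨_, h⟩ | ⟨_, h⟩
      · rw [h]; exact hclt p hp
      · rw [h]; exact hβΔ
      · rw [h]; exact hαΔ
    have hc''y : ∀ p ∈ P', p.2 = p₀.2 → c'' p ≠ β := by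
      intro p hp hp2
      rw [h4 p₀.2 hβmiss' p hp hp2]
      exact hβmiss' p hp hp2
    set c' : V × V → ℕ := Function.update c'' p₀ β with hc'
    have hc'p₀ : c' p₀ = β := Function.update_self _ _ _
    have hc'ne : ∀ p, p ≠ p₀ → c' p = c'' p := fun p h => Function.update_of_ne h _ _
    have hP'mem : ∀ p ∈ P, p ≠ p₀ → p ∈ P' := fun p hp h => Finset.mem_erase.mpr ⟨h, hp⟩
    have claim : ∀ q ∈ P', (p₀.1 = q.1 ∨ p₀.2 = q.2) → c'' q ≠ β := by
      intro q hq hadj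
      rcases hadj with ha | ha
      · exact h2 q hq ha.symm
      · exact hc''y q hq ha.symm
    refine ⟨c', ?_, ?_⟩
    · intro p hp q hq hne hadj
      by_cases h1' : p = p₀
      · have h2' : q ≠ p₀ := fun e => hne (h1'.trans e.symm)
        rw [h1', hc'p₀, hc'ne q h2']
        have hadj' : p₀.1 = q.1 ∨ p₀.2 = q.2 := by rw [← h1']; exact hadj
        exact fun hh => claim q (hP'mem q hq h2') hadj' hh.symm
      by_cases h2' : q = p₀
      · rw [h2', hc'p₀, hc'ne p h1']
        exact claim p (hP'mem p hp h1')
          (by rw [← h2']; rcases hadj with a | a; exacts [Or.inl a.symm, Or.inr a.symm])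
      · rw [hc'ne p h1', hc'ne q h2']
        exact h1 p (hP'mem p hp h1') q (hP'mem q hq h2') hne hadj
    · intro p hp
      by_cases h1' : p = p₀
      · rw [h1', hc'p₀]; exact hβΔ
      · rw [hc'ne p h1']; exact hc''lt p (hP'mem p hp h1')


/-- `f` absorbs `e`: `f` is an out-neighbour of `e` in Galvin's orientation of the
line graph determined by the proper coloring `c`. -/
def Absorbs (c : V × V → ℕ) (f e : V × V) : Prop :=
  (f.1 = e.1 ∧ c f < c e) ∨ (f.2 = e.2 ∧ c e < c f)

instance (c : V × V → ℕ) (f e : V × V) : Decidable (Absorbs c f e) :=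
  decidable_of_iff ((f.1 = e.1 ∧ c f < c e) ∨ (f.2 = e.2 ∧ c e < c f)) Iff.rfl

/-- Every subset of edges has a kernel (a stable matching) for Galvin's orientation. -/
lemma kernel : ∀ (n : ℕ) (F : Finset (V × V)), F.card ≤ n → ∀ (c : V × V → ℕ), Proper F c →
    ∃ M ⊆ F, (∀ e ∈ M, ∀ f ∈ M, e ≠ f → ¬(e.1 = f.1 ∨ e.2 = f.2)) ∧
      (∀ e ∈ F, e ∉ M → ∃ f ∈ M, Absorbs c f e) := by
  intro n
  induction n with
  | zero =>
    intro F hcard c _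
    have hF : F = ∅ := Finset.card_eq_zero.mp (Nat.le_zero.mp hcard)
    subst hF
    exact ⟨∅, le_rfl, fun e he => absurd he (by simp), fun e he => absurd he (by simp)⟩
  | succ n ih =>
    intro F hcard c hprop
    classical
    by_cases hdel : ∃ e ∈ F, (∀ g ∈ F, g.1 = e.1 → c e ≤ c g) ∧
        ∃ f ∈ F, f ≠ e ∧ f.2 = e.2 ∧ c f < c e
    · obtain ⟨e, heF, hmin, f, hfF, hfne, hf2, hflt⟩ := hdel
      have hene : e ≠ f := fun h => hfne h.symm
      have hcard' : (F.erase f).card ≤ n := by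
        have h1 : (F.erase f).card = F.card - 1 := Finset.card_erase_of_mem hfF
        have h2 : 0 < F.card := Finset.card_pos.mpr ⟨f, hfF⟩
        omega
      obtain ⟨M, hMsub, hmatch, habs⟩ :=
        ih (F.erase f) hcard' c (hprop.mono (Finset.erase_subset _ _))
      have heF' : e ∈ F.erase f := Finset.mem_erase.mpr ⟨hene, heF⟩
      refine ⟨M, hMsub.trans (Finset.erase_subset _ _), hmatch, ?_⟩
      intro g hgF hgM
      by_cases hgf : g = f
      · subst hgf
        by_cases heM : e ∈ M
        · exact ⟨e, heM, Or.inr ⟨hf2.symm, hflt⟩⟩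
        · obtain ⟨h, hhM, hhabs⟩ := habs e heF' heM
          rcases hhabs with ⟨h1, h2⟩ | ⟨h1, h2⟩
          · exact absurd (hmin h ((Finset.erase_subset _ _) (hMsub hhM)) h1) (not_le.mpr h2)
          · exact ⟨h, hhM, Or.inr ⟨h1.trans hf2.symm, hflt.trans h2⟩⟩
      · exact habs g (Finset.mem_erase.mpr ⟨hgf, hgF⟩) hgM
    · -- no deletable pair: the set of left-favorites is a kernel
      set M : Finset (V × V) := F.filter (fun e => ∀ g ∈ F, g.1 = e.1 → c e ≤ c g) with hM
      have hMmem : ∀ e ∈ M, e ∈ F ∧ ∀ g ∈ F, g.1 = e.1 → c e ≤ c g :=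
        fun e he => Finset.mem_filter.mp he
      refine ⟨M, Finset.filter_subset _ _, ?_, ?_⟩
      · intro e heM f hfM hne hadj
        obtain ⟨heF, hemin⟩ := hMmem e heM
        obtain ⟨hfF, hfmin⟩ := hMmem f hfM
        rcases hadj with ha | ha
        · have h1 := hemin f hfF ha.symm
          have h2 := hfmin e heF ha
          exact hprop e heF f hfF hne (Or.inl ha) (le_antisymm h1 h2)
        · have hcc : c e ≠ c f := hprop e heF f hfF hne (Or.inr ha)
          rcases lt_or_gt_of_ne hcc with h | h
          · exact hdel ⟨f, hfF, hfmin, e, heF, hne, ha, h⟩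
          · exact hdel ⟨e, heF, hemin, f, hfF, fun hh => hne hh.symm, ha.symm, h⟩
      · intro g hgF hgM
        have hS : (F.filter (fun p => p.1 = g.1)).Nonempty :=
          ⟨g, Finset.mem_filter.mpr ⟨hgF, rfl⟩⟩
        obtain ⟨m, hmS, hmmin⟩ := Finset.exists_min_image _ c hS
        obtain ⟨hmF, hm1⟩ := Finset.mem_filter.mp hmS
        have hmM : m ∈ M := by
          refine Finset.mem_filter.mpr ⟨hmF, fun q hq hq1 => ?_⟩
          exact hmmin q (Finset.mem_filter.mpr ⟨hq, hq1.trans hm1⟩)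
        have hmg : m ≠ g := fun h => hgM (h ▸ hmM)
        have hlt : c m < c g := by
          have h1 := hmmin g (Finset.mem_filter.mpr ⟨hgF, rfl⟩)
          have h2 : c m ≠ c g := hprop m hmF g hgF hmg (Or.inl hm1)
          omega
        exact ⟨m, hmM, Or.inl ⟨hm1, hlt⟩⟩

/-- The out-degree of an edge within a remaining set `R` of uncolored edges. -/
def outdeg (R : Finset (V × V)) (c : V × V → ℕ) (e : V × V) : ℕ :=
  (R.filter (fun f => f ≠ e ∧ Absorbs c f e)).card

/-- The main induction: if every uncolored edge has a list longer than its
out-degree, a proper coloring from the lists exists. -/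
lemma listcolor : ∀ (n : ℕ) (R : Finset (V × V)) (c : V × V → ℕ) (L : V × V → Finset ℕ),
    (∑ p ∈ R, (L p).card) ≤ n → Proper R c →
    (∀ e ∈ R, outdeg R c e < (L e).card) →
    ∃ col : V × V → ℕ, (∀ e ∈ R, col e ∈ L e) ∧ Proper R col := by
  intro n
  induction n with
  | zero =>
    intro R c L hsum _ hdeg
    have hR : ∀ e, e ∉ R := by
      intro e he
      have h1 : 0 < (L e).card := lt_of_le_of_lt (Nat.zero_le _) (hdeg e he)
      have h2 : (L e).card ≤ ∑ p ∈ R, (L p).card :=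
        Finset.single_le_sum (f := fun p => (L p).card) (fun p _ => Nat.zero_le _) he
      omega
    exact ⟨fun _ => 0, fun e he => absurd he (hR e), fun e he => absurd he (hR e)⟩
  | succ n ih =>
    intro R c L hsum hprop hdeg
    classical
    rcases R.eq_empty_or_nonempty with rfl | ⟨e₀, he₀⟩
    · exact ⟨fun _ => 0, fun e he => absurd he (by simp), fun e he => absurd he (by simp)⟩
    have hL₀pos : 0 < (L e₀).card := lt_of_le_of_lt (Nat.zero_le _) (hdeg e₀ he₀)
    obtain ⟨α, hα⟩ := Finset.card_pos.mp hL₀pos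
    set F : Finset (V × V) := R.filter (fun p => α ∈ L p) with hF
    have hFsub : F ⊆ R := Finset.filter_subset _ _
    have hF₀ : e₀ ∈ F := Finset.mem_filter.mpr ⟨he₀, hα⟩
    obtain ⟨M, hMF, hmatch, habs⟩ := kernel F.card F le_rfl c (hprop.mono hFsub)
    have hMR : M ⊆ R := hMF.trans hFsub
    have hMα : ∀ e ∈ M, α ∈ L e := fun e he => (Finset.mem_filter.mp (hMF he)).2
    have hMne : M.Nonempty := by
      by_cases h : e₀ ∈ M
      · exact ⟨e₀, h⟩
      · obtain ⟨f, hf, _⟩ := habs e₀ hF₀ h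
        exact ⟨f, hf⟩
    set R' : Finset (V × V) := R \ M with hR'
    have hR'sub : R' ⊆ R := Finset.sdiff_subset
    have hR'mem : ∀ e, e ∈ R' ↔ e ∈ R ∧ e ∉ M := fun e => Finset.mem_sdiff
    set L' : V × V → Finset ℕ := fun p => if p ∈ F ∧ p ∉ M then (L p).erase α else L p
      with hL'
    have hL'sub : ∀ p, L' p ⊆ L p := by
      intro p
      show (if p ∈ F ∧ p ∉ M then (L p).erase α else L p) ⊆ L p
      split
      · exact Finset.erase_subset _ _
      · exact Finset.Subset.refl _
    -- the measure decreases
    have hsum' : (∑ p ∈ R', (L' p).card) ≤ n := by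
      obtain ⟨m, hm⟩ := hMne
      have h1 : (∑ p ∈ R', (L p).card) + (∑ p ∈ M, (L p).card) = ∑ p ∈ R, (L p).card :=
        Finset.sum_sdiff hMR
      have h2 : (L m).card ≤ ∑ p ∈ M, (L p).card :=
        Finset.single_le_sum (f := fun p => (L p).card) (fun p _ => Nat.zero_le _) hm
      have h3 : 0 < (L m).card := lt_of_le_of_lt (Nat.zero_le _) (hdeg m (hMR hm))
      have h4 : (∑ p ∈ R', (L' p).card) ≤ ∑ p ∈ R', (L p).card :=
        Finset.sum_le_sum (fun p _ => Finset.card_le_card (hL'sub p))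
      omega
    -- the invariant is preserved
    have hdeg' : ∀ e ∈ R', outdeg R' c e < (L' e).card := by
      intro e he
      obtain ⟨heR, heM⟩ := (hR'mem e).mp he
      by_cases heF : e ∈ F
      · obtain ⟨f, hfM, hfabs⟩ := habs e heF heM
        have hfne : f ≠ e := fun h => heM (h ▸ hfM)
        have hfmem : f ∈ R.filter (fun g => g ≠ e ∧ Absorbs c g e) :=
          Finset.mem_filter.mpr ⟨hMR hfM, hfne, hfabs⟩
        have hss : R'.filter (fun g => g ≠ e ∧ Absorbs c g e) ⊆
            (R.filter (fun g => g ≠ e ∧ Absorbs c g e)).erase f := by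
          intro p hp
          obtain ⟨hpR', hpc⟩ := Finset.mem_filter.mp hp
          refine Finset.mem_erase.mpr ⟨?_, Finset.mem_filter.mpr ⟨hR'sub hpR', hpc⟩⟩
          intro hpf
          exact ((hR'mem p).mp hpR').2 (hpf ▸ hfM)
        have h1 : outdeg R' c e ≤ outdeg R c e - 1 := by
          have := Finset.card_le_card hss
          rw [Finset.card_erase_of_mem hfmem] at this
          exact this
        have h2 : 1 ≤ outdeg R c e := Finset.card_pos.mpr ⟨f, hfmem⟩
        have h3 : outdeg R c e < (L e).card := hdeg e heR
        have h4 : (L' e).card = (L e).card - 1 := by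
          have : L' e = (L e).erase α := by
            show (if e ∈ F ∧ e ∉ M then (L e).erase α else L e) = _
            exact if_pos ⟨heF, heM⟩
          rw [this]
          exact Finset.card_erase_of_mem ((Finset.mem_filter.mp heF).2)
        have h5 : 0 < (L e).card := lt_of_le_of_lt (Nat.zero_le _) h3
        omega
      · have h1 : L' e = L e := by
          show (if e ∈ F ∧ e ∉ M then (L e).erase α else L e) = _
          exact if_neg (fun h => heF h.1)
        have h2 : outdeg R' c e ≤ outdeg R c e :=
          Finset.card_le_card (Finset.filter_subset_filter _ hR'sub)
        rw [h1]
        exact lt_of_le_of_lt h2 (hdeg e heR)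
    obtain ⟨col', hmem', hprop'⟩ := ih R' c L' hsum' (hprop.mono hR'sub) hdeg'
    set col : V × V → ℕ := fun p => if p ∈ M then α else col' p with hcol
    have hcolM : ∀ p ∈ M, col p = α := fun p hp => if_pos hp
    have hcolR' : ∀ p, p ∉ M → col p = col' p := fun p hp => if_neg hp
    have hne_α : ∀ q ∈ R, q ∉ M → col q ≠ α := by
      intro q hqR hqM
      rw [hcolR' q hqM]
      have hq' : q ∈ R' := (hR'mem q).mpr ⟨hqR, hqM⟩
      have hmem'' := hmem' q hq'
      by_cases hqF : q ∈ F
      · have h1 : L' q = (L q).erase α := by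
          show (if q ∈ F ∧ q ∉ M then (L q).erase α else L q) = _
          exact if_pos ⟨hqF, hqM⟩
        rw [h1] at hmem''
        exact (Finset.mem_erase.mp hmem'').1
      · intro hcq
        apply hqF
        refine Finset.mem_filter.mpr ⟨hqR, ?_⟩
        rw [← hcq]
        have h1 : L' q = L q := by
          show (if q ∈ F ∧ q ∉ M then (L q).erase α else L q) = _
          exact if_neg (fun h => hqF h.1)
        rw [← h1]
        exact hmem''
    refine ⟨col, ?_, ?_⟩
    · intro e heR
      by_cases heM : e ∈ M
      · rw [hcolM e heM]
        exact hMα e heM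
      · rw [hcolR' e heM]
        exact hL'sub e (hmem' e ((hR'mem e).mpr ⟨heR, heM⟩))
    · intro p hp q hq hne hadj
      by_cases hpM : p ∈ M
      · by_cases hqM : q ∈ M
        · exact absurd hadj (hmatch p hpM q hqM hne)
        · rw [hcolM p hpM]
          exact fun h => hne_α q hq hqM h.symm
      · by_cases hqM : q ∈ M
        · rw [hcolM q hqM]
          exact hne_α p hp hpM
        · rw [hcolR' p hpM, hcolR' q hqM]
          exact hprop' p ((hR'mem p).mpr ⟨hp, hpM⟩) q ((hR'mem q).mpr ⟨hq, hqM⟩) hne hadj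


/-- Galvin's theorem on oriented pairs. -/
lemma core (P : Finset (V × V)) (Δ : ℕ)
    (hdX : ∀ v, (P.filter (fun p => p.1 = v)).card ≤ Δ)
    (hdY : ∀ v, (P.filter (fun p => p.2 = v)).card ≤ Δ)
    (L : V × V → Finset ℕ) (hL : ∀ p ∈ P, Δ ≤ (L p).card) :
    ∃ col : V × V → ℕ, (∀ p ∈ P, col p ∈ L p) ∧ Proper P col := by
  classical
  obtain ⟨c, hcprop, hclt⟩ := koenig P.card P le_rfl Δ hdX hdY
  apply listcolor (∑ p ∈ P, (L p).card) P c L le_rfl hcprop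
  intro e heP
  have hce : c e < Δ := hclt e heP
  have hsub : P.filter (fun f => f ≠ e ∧ Absorbs c f e) ⊆
      (P.filter (fun f => f ≠ e ∧ f.1 = e.1 ∧ c f < c e)) ∪
      (P.filter (fun f => f ≠ e ∧ f.2 = e.2 ∧ c e < c f)) := by
    intro p hp
    obtain ⟨h1, h2, h3⟩ := Finset.mem_filter.mp hp
    rcases h3 with h | h
    · exact Finset.mem_union_left _ (Finset.mem_filter.mpr ⟨h1, h2, h⟩)
    · exact Finset.mem_union_right _ (Finset.mem_filter.mpr ⟨h1, h2, h⟩)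
  have cardA : (P.filter (fun f => f ≠ e ∧ f.1 = e.1 ∧ c f < c e)).card ≤ c e := by
    calc (P.filter (fun f => f ≠ e ∧ f.1 = e.1 ∧ c f < c e)).card
        ≤ (Finset.range (c e)).card := by
          apply Finset.card_le_card_of_injOn c
          · intro p hp
            exact Finset.mem_range.mpr (Finset.mem_filter.mp hp).2.2.2
          · intro p hp q hq hpq
            by_contra hne
            obtain ⟨hpP, _, hp1, _⟩ := Finset.mem_filter.mp (Finset.mem_coe.mp hp)
            obtain ⟨hqP, _, hq1, _⟩ := Finset.mem_filter.mp (Finset.mem_coe.mp hq)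
            exact hcprop p hpP q hqP hne (Or.inl (hp1.trans hq1.symm)) hpq
      _ = c e := Finset.card_range _
  have cardB : (P.filter (fun f => f ≠ e ∧ f.2 = e.2 ∧ c e < c f)).card ≤ Δ - c e - 1 := by
    calc (P.filter (fun f => f ≠ e ∧ f.2 = e.2 ∧ c e < c f)).card
        ≤ (Finset.Ioo (c e) Δ).card := by
          apply Finset.card_le_card_of_injOn c
          · intro p hp
            obtain ⟨hpP, _, _, hplt⟩ := Finset.mem_filter.mp hp
            exact Finset.mem_Ioo.mpr ⟨hplt, hclt p hpP⟩
          · intro p hp q hq hpq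
            by_contra hne
            obtain ⟨hpP, _, hp1, _⟩ := Finset.mem_filter.mp (Finset.mem_coe.mp hp)
            obtain ⟨hqP, _, hq1, _⟩ := Finset.mem_filter.mp (Finset.mem_coe.mp hq)
            exact hcprop p hpP q hqP hne (Or.inr (hp1.trans hq1.symm)) hpq
      _ = Δ - c e - 1 := Nat.card_Ioo _ _
  have hsplit : outdeg P c e ≤ c e + (Δ - c e - 1) := by
    unfold outdeg
    calc (P.filter (fun f => f ≠ e ∧ Absorbs c f e)).card
        ≤ ((P.filter (fun f => f ≠ e ∧ f.1 = e.1 ∧ c f < c e)) ∪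
           (P.filter (fun f => f ≠ e ∧ f.2 = e.2 ∧ c e < c f))).card :=
          Finset.card_le_card hsub
      _ ≤ _ + _ := Finset.card_union_le _ _
      _ ≤ c e + (Δ - c e - 1) := Nat.add_le_add cardA cardB
  have hLe := hL e heP
  omega

end Galvin

open SimpleGraph in
theorem galvin_aux {V : Type*} [Fintype V] (G : SimpleGraph V) [DecidableRel G.Adj]
    (hbip : G.Colorable 2) (L : Sym2 V → Finset ℕ)
    (hL : ∀ e ∈ G.edgeSet, G.maxDegree ≤ (L e).card) :
    ∃ C : Sym2 V → ℕ,
      (∀ e ∈ G.edgeSet, ∀ f ∈ G.edgeSet, e ≠ f → (∃ v, v ∈ e ∧ v ∈ f) → C e ≠ C f) ∧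
      ∀ e ∈ G.edgeSet, C e ∈ L e := by
  classical
  obtain ⟨κ⟩ := hbip
  set P : Finset (V × V) :=
    Finset.univ.filter (fun p : V × V => G.Adj p.1 p.2 ∧ κ p.1 = 0) with hPdef
  have hPadj : ∀ p ∈ P, G.Adj p.1 p.2 := fun p hp => (Finset.mem_filter.mp hp).2.1
  have hP0 : ∀ p ∈ P, κ p.1 = 0 := fun p hp => (Finset.mem_filter.mp hp).2.2
  have fin2 : ∀ a b : Fin 2, a ≠ b → a ≠ 0 → b = 0 := by decide
  have hP1 : ∀ p ∈ P, κ p.2 ≠ 0 := by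
    intro p hp h
    exact κ.valid (hPadj p hp) ((hP0 p hp).trans h.symm)
  have hdX : ∀ v, (P.filter (fun p => p.1 = v)).card ≤ G.maxDegree := by
    intro v
    have h1 : (P.filter (fun p => p.1 = v)).card ≤ (G.neighborFinset v).card := by
      apply Finset.card_le_card_of_injOn (fun p => p.2)
      · intro p hp
        obtain ⟨hp1, hp2⟩ := Finset.mem_filter.mp hp
        rw [Finset.mem_coe, SimpleGraph.mem_neighborFinset, ← hp2]
        exact hPadj p hp1
      · intro p hp q hq hpq
        obtain ⟨_, hp2⟩ := Finset.mem_filter.mp (Finset.mem_coe.mp hp)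
        obtain ⟨_, hq2⟩ := Finset.mem_filter.mp (Finset.mem_coe.mp hq)
        exact Prod.ext (hp2.trans hq2.symm) hpq
    exact h1.trans (G.degree_le_maxDegree v)
  have hdY : ∀ v, (P.filter (fun p => p.2 = v)).card ≤ G.maxDegree := by
    intro v
    have h1 : (P.filter (fun p => p.2 = v)).card ≤ (G.neighborFinset v).card := by
      apply Finset.card_le_card_of_injOn (fun p => p.1)
      · intro p hp
        obtain ⟨hp1, hp2⟩ := Finset.mem_filter.mp hp
        rw [Finset.mem_coe, SimpleGraph.mem_neighborFinset, ← hp2]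
        exact (hPadj p hp1).symm
      · intro p hp q hq hpq
        obtain ⟨_, hp2⟩ := Finset.mem_filter.mp (Finset.mem_coe.mp hp)
        obtain ⟨_, hq2⟩ := Finset.mem_filter.mp (Finset.mem_coe.mp hq)
        exact Prod.ext hpq (hp2.trans hq2.symm)
    exact h1.trans (G.degree_le_maxDegree v)
  set L' : V × V → Finset ℕ := fun p => L s(p.1, p.2) with hL'def
  have hL' : ∀ p ∈ P, G.maxDegree ≤ (L' p).card := by
    intro p hp
    exact hL _ (G.mem_edgeSet.mpr (hPadj p hp))
  obtain ⟨col, hcolmem, hcolprop⟩ := Galvin.core P G.maxDegree hdX hdY L' hL'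
  set col₂ : V × V → ℕ :=
    fun p => if p ∈ P then col p else if (p.2, p.1) ∈ P then col (p.2, p.1) else 0
    with hcol₂
  have hsymm : ∀ x y : V, col₂ (x, y) = col₂ (y, x) := by
    intro x y
    show (if (x, y) ∈ P then col (x, y) else if (y, x) ∈ P then col (y, x) else 0) =
      (if (y, x) ∈ P then col (y, x) else if (x, y) ∈ P then col (x, y) else 0)
    by_cases hxy : (x, y) ∈ P
    · have hyx : (y, x) ∉ P := fun h => hP1 (y, x) h (hP0 (x, y) hxy)
      rw [if_pos hxy, if_neg hyx, if_pos hxy]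
    · by_cases hyx : (y, x) ∈ P
      · rw [if_neg hxy, if_pos hyx, if_pos hyx]
      · rw [if_neg hxy, if_neg hyx, if_neg hyx, if_neg hxy]
  set C : Sym2 V → ℕ := Sym2.lift ⟨fun x y => col₂ (x, y), hsymm⟩ with hCdef
  have CP : ∀ p ∈ P, C s(p.1, p.2) = col p := by
    intro p hp
    show (if p ∈ P then col p else if (p.2, p.1) ∈ P then col (p.2, p.1) else 0) = col p
    exact if_pos hp
  have key : ∀ e ∈ G.edgeSet, ∃ p, p ∈ P ∧ e = s(p.1, p.2) := by
    intro e
    induction e using Sym2.ind with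
    | _ x y =>
      intro he
      have hadj : G.Adj x y := G.mem_edgeSet.mp he
      by_cases h0 : κ x = 0
      · exact ⟨(x, y), Finset.mem_filter.mpr ⟨Finset.mem_univ _, hadj, h0⟩, rfl⟩
      · have h1 : κ y = 0 := fin2 _ _ (κ.valid hadj) h0
        exact ⟨(y, x), Finset.mem_filter.mpr ⟨Finset.mem_univ _, hadj.symm, h1⟩, Sym2.eq_swap⟩
  refine ⟨C, ?_, ?_⟩
  · intro e he f hf hne hadj
    obtain ⟨p, hp, rfl⟩ := key e he
    obtain ⟨q, hq, rfl⟩ := key f hf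
    rw [CP p hp, CP q hq]
    have hpq : p ≠ q := fun h => hne (by rw [h])
    obtain ⟨v, hv1, hv2⟩ := hadj
    rw [Sym2.mem_iff] at hv1 hv2
    have hshare : p.1 = q.1 ∨ p.2 = q.2 := by
      rcases hv1 with h1 | h1 <;> rcases hv2 with h2 | h2
      · exact Or.inl (h1.symm.trans h2)
      · exact absurd (hP0 p hp) (by rw [h1.symm.trans h2]; exact hP1 q hq)
      · exact absurd (hP0 q hq) (by rw [← h1.symm.trans h2]; exact hP1 p hp)
      · exact Or.inr (h1.symm.trans h2)
    exact hcolprop p hp q hq hpq hshare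
  · intro e he
    obtain ⟨p, hp, rfl⟩ := key e he
    rw [CP p hp]
    exact hcolmem p hp

/-- Galvin's theorem (special case): a bipartite graph with lists of size at least `Δ(G)`
on every edge admits a proper list edge coloring. -/
theorem stmt_12 {V : Type*} [Fintype V] (G : SimpleGraph V) [DecidableRel G.Adj]
    (hbip : G.Colorable 2) (L : Sym2 V → Finset ℕ)
    (hL : ∀ e ∈ G.edgeSet, G.maxDegree ≤ (L e).card) :
    ∃ C : Sym2 V → ℕ, IsProperEdgeColoring G C ∧ ∀ e ∈ G.edgeSet, C e ∈ L e := by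
  obtain ⟨C, h1, h2⟩ := galvin_aux G hbip L hL
  exact ⟨C, h1, h2⟩
end

section
/- Let G be a bipartite graph and F ⊆ E(G) a set of edges such that any two edges of F are at distance at least 2 in G (F is an induced matching), together with a function c: F → {1, ..., Δ(G)+1}. Then there exists a proper edge coloring of G with Δ(G)+1 colors agreeing with c on F. -/
open SimpleGraph

namespace EPE

open Finset

attribute [local instance] Classical.propDecidable

variable {α β : Type*}

/-- Two "edges" (pairs) are adjacent if they share a row or a column. -/
def Adj2 (e f : α × β) : Prop := e.1 = f.1 ∨ e.2 = f.2

/-- A proper edge coloring on a set of pairs. -/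
def ProperOn (A : Finset (α × β)) (ψ : α × β → ℕ) : Prop :=
  ∀ e ∈ A, ∀ f ∈ A, e ≠ f → Adj2 e f → ψ e ≠ ψ f

lemma row_inj {A : Finset (α × β)} {ψ : α × β → ℕ} (h : ProperOn A ψ)
    {e f : α × β} (he : e ∈ A) (hf : f ∈ A) (hrow : e.1 = f.1) (hc : ψ e = ψ f) :
    e = f := by
  by_contra hne
  exact h e he f hf hne (Or.inl hrow) hc

lemma col_inj {A : Finset (α × β)} {ψ : α × β → ℕ} (h : ProperOn A ψ)
    {e f : α × β} (he : e ∈ A) (hf : f ∈ A) (hcol : e.2 = f.2) (hc : ψ e = ψ f) :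
    e = f := by
  by_contra hne
  exact h e he f hf hne (Or.inr hcol) hc

/-- Key extension step for König: extend a proper `<n` coloring to one more edge,
using an alternating-chain (Kempe) swap. -/
lemma konig_extend {A' : Finset (α × β)} {ψ : α × β → ℕ} {n : ℕ} (x : α) (y : β)
    (hprop : ProperOn A' ψ) (hlt : ∀ e ∈ A', ψ e < n)
    (he₀ : (x, y) ∉ A')
    {a b : ℕ} (ha : a < n) (hb : b < n)
    (hax : ∀ e ∈ A', e.1 = x → ψ e ≠ a)
    (hby : ∀ e ∈ A', e.2 = y → ψ e ≠ b) :
    ∃ ψ₂ : α × β → ℕ, ProperOn (insert (x, y) A') ψ₂ ∧ ∀ e ∈ insert (x, y) A', ψ₂ e < n := by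
  by_cases hbx : ∀ e ∈ A', e.1 = x → ψ e ≠ b
  · -- b is free at row x and column y: just use it
    refine ⟨Function.update ψ (x, y) b, ?_, ?_⟩
    · intro e he f hf hne hadj
      rcases Finset.mem_insert.mp he with rfl | he'
      · rcases Finset.mem_insert.mp hf with rfl | hf'
        · exact absurd rfl hne
        · rw [Function.update_self, Function.update_of_ne (by rintro rfl; exact he₀ hf')]
          rcases hadj with h1 | h2
          · exact fun hc => hbx f hf' h1.symm hc.symm
          · exact fun hc => hby f hf' h2.symm hc.symm
      · rcases Finset.mem_insert.mp hf with rfl | hf'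
        · rw [Function.update_self, Function.update_of_ne (by rintro rfl; exact he₀ he')]
          rcases hadj with h1 | h2
          · exact fun hc => hbx e he' h1 hc
          · exact fun hc => hby e he' h2 hc
        · rw [Function.update_of_ne (by rintro rfl; exact he₀ he'),
            Function.update_of_ne (by rintro rfl; exact he₀ hf')]
          exact hprop e he' f hf' hne hadj
    · intro e he
      rcases Finset.mem_insert.mp he with rfl | he'
      · rw [Function.update_self]; exact hb
      · rw [Function.update_of_ne (by rintro rfl; exact he₀ he')]; exact hlt e he'
  · push_neg at hbx
    obtain ⟨eb, heb, hebx, hebb⟩ := hbx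
    have hab : a ≠ b := fun h => hax eb heb hebx (h ▸ hebb)
    -- the alternating relation
    set R : (α × β) → (α × β) → Prop := fun e f =>
      e ∈ A' ∧ f ∈ A' ∧ e ≠ f ∧
        ((ψ e = b ∧ ψ f = a ∧ e.2 = f.2) ∨ (ψ e = a ∧ ψ f = b ∧ e.1 = f.1)) with hR
    set C : (α × β) → Prop := fun e => Relation.ReflTransGen R eb e with hC
    have hCmem : ∀ e, C e → e ∈ A' ∧ (ψ e = a ∨ ψ e = b) := by
      intro e h
      induction h with
      | refl => exact ⟨heb, Or.inr hebb⟩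
      | tail h1 h2 ih =>
        obtain ⟨_, hf, _, hcase⟩ := h2
        rcases hcase with ⟨_, hfa, _⟩ | ⟨_, hfb, _⟩
        · exact ⟨hf, Or.inl hfa⟩
        · exact ⟨hf, Or.inr hfb⟩
    -- closure: a-edges of C have a b-edge of C in their column;
    -- b-edges of C are eb or have an a-edge of C in their row.
    have hcl : ∀ e, C e →
        (ψ e = a → ∃ h, C h ∧ ψ h = b ∧ h.2 = e.2) ∧
        (ψ e = b → e = eb ∨ ∃ h, C h ∧ ψ h = a ∧ h.1 = e.1) := by
      intro e h
      induction h with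
      | refl =>
        constructor
        · intro hea; exact absurd (hea.symm.trans hebb) hab
        · intro _; exact Or.inl rfl
      | @tail f g h1 h2 ih =>
        obtain ⟨hfA, hgA, hne, hcase⟩ := h2
        have hCf : C f := h1
        rcases hcase with ⟨hfb, hga, hcol⟩ | ⟨hfa, hgb, hrow⟩
        · constructor
          · intro _; exact ⟨f, hCf, hfb, hcol⟩
          · intro hgb; exact absurd (hga ▸ hgb) hab
        · constructor
          · intro hga; exact absurd (hga ▸ hgb.symm) (fun hh => hab hh.symm)
          · intro _; exact Or.inr ⟨f, hCf, hfa, hrow⟩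
    -- neighbor closure
    have hncl : ∀ e f, C e → f ∈ A' → f ≠ e → Adj2 e f → (ψ f = a ∨ ψ f = b) → C f := by
      intro e f hCe hfA hne hadj hfab
      have heA := (hCmem e hCe).1
      have heab := (hCmem e hCe).2
      have hpsine : ψ e ≠ ψ f := hprop e heA f hfA (fun h => hne h.symm) hadj
      rcases heab with hea | heb'
      · -- e is an a-edge
        have hfb : ψ f = b := by
          rcases hfab with hfa | hfb
          · exact absurd (hea.trans hfa.symm) hpsine
          · exact hfb
        rcases hadj with hrow | hcol
        · -- same row: forward step
          exact hCe.tail ⟨heA, hfA, fun h => hne h.symm, Or.inr ⟨hea, hfb, hrow⟩⟩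
        · -- same column: f is the b-edge witnessing e's entry
          obtain ⟨h', hCh', hh'b, hh'col⟩ := (hcl e hCe).1 hea
          have : h' = f := col_inj hprop (hCmem h' hCh').1 hfA (hh'col.trans hcol)
            (hh'b.trans hfb.symm)
          exact this ▸ hCh'
      · -- e is a b-edge
        have hfa : ψ f = a := by
          rcases hfab with hfa | hfb
          · exact hfa
          · exact absurd (heb'.trans hfb.symm) hpsine
        rcases hadj with hrow | hcol
        · -- same row: e entered via an a-edge in its row, which must be f; or e = eb
          rcases (hcl e hCe).2 heb' with rfl | ⟨h', hCh', hh'a, hh'row⟩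
          · exact absurd hfa (hax f hfA (by rw [← hrow, hebx]))
          · have : h' = f := row_inj hprop (hCmem h' hCh').1 hfA (hh'row.trans hrow)
              (hh'a.trans hfa.symm)
            exact this ▸ hCh'
        · exact hCe.tail ⟨heA, hfA, fun h => hne h.symm, Or.inl ⟨heb', hfa, hcol⟩⟩
    -- the swapped coloring
    set ψ' : α × β → ℕ := fun e => if C e then (if ψ e = a then b else a) else ψ e with hψ'
    have hψ'C : ∀ e, C e → (ψ e = a → ψ' e = b) ∧ (ψ e = b → ψ' e = a) := by
      intro e hCe
      constructor
      · intro h; simp only [hψ', if_pos hCe, if_pos h]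
      · intro h; simp only [hψ', if_pos hCe]
        rw [if_neg (by rw [h]; exact fun hh => hab hh.symm)]
    have hψ'nC : ∀ e, ¬ C e → ψ' e = ψ e := fun e h => by simp only [hψ', if_neg h]
    have hψ'ab : ∀ e, C e → ψ' e = a ∨ ψ' e = b := by
      intro e hCe
      rcases (hCmem e hCe).2 with h | h
      · exact Or.inr ((hψ'C e hCe).1 h)
      · exact Or.inl ((hψ'C e hCe).2 h)
    have hprop' : ProperOn A' ψ' := by
      intro e he f hf hne hadj
      have hpsine : ψ e ≠ ψ f := hprop e he f hf hne hadj
      by_cases hCe : C e <;> by_cases hCf : C f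
      · -- both swapped
        rcases (hCmem e hCe).2 with h1 | h1 <;> rcases (hCmem f hCf).2 with h2 | h2
        · exact absurd (h1.trans h2.symm) hpsine
        · rw [(hψ'C e hCe).1 h1, (hψ'C f hCf).2 h2]; exact hab.symm
        · rw [(hψ'C e hCe).2 h1, (hψ'C f hCf).1 h2]; exact hab
        · exact absurd (h1.trans h2.symm) hpsine
      · -- e swapped, f not: f is not an (a|b)-edge
        have hfab : ¬ (ψ f = a ∨ ψ f = b) := fun h => hCf (hncl e f hCe hf (fun hh => hne hh.symm) hadj h)
        rw [hψ'nC f hCf]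
        rcases hψ'ab e hCe with h | h <;> rw [h] <;> intro hc <;> exact hfab (by rw [← hc]; tauto)
      · have heab : ¬ (ψ e = a ∨ ψ e = b) := fun h => hCe (hncl f e hCf he hne (by
          rcases hadj with h1 | h2
          · exact Or.inl h1.symm
          · exact Or.inr h2.symm) h)
        rw [hψ'nC e hCe]
        rcases hψ'ab f hCf with h | h <;> rw [h] <;> intro hc <;> exact heab (by rw [hc]; tauto)
      · rw [hψ'nC e hCe, hψ'nC f hCf]; exact hpsine
    have hlt' : ∀ e ∈ A', ψ' e < n := by
      intro e he
      by_cases hCe : C e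
      · rcases hψ'ab e hCe with h | h <;> rw [h] <;> assumption
      · rw [hψ'nC e hCe]; exact hlt e he
    -- after the swap, b is free at row x and column y
    have hbx' : ∀ e ∈ A', e.1 = x → ψ' e ≠ b := by
      intro e he hex
      by_cases hCe : C e
      · rcases (hCmem e hCe).2 with h | h
        · exact absurd h (hax e he hex)
        · rw [(hψ'C e hCe).2 h]; exact fun hh => hab hh
      · rw [hψ'nC e hCe]
        intro hb'
        have : e = eb := row_inj hprop he heb (hex.trans hebx.symm) (hb'.trans hebb.symm)
        exact hCe (this ▸ Relation.ReflTransGen.refl)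
    have hby' : ∀ e ∈ A', e.2 = y → ψ' e ≠ b := by
      intro e he hey
      by_cases hCe : C e
      · rcases (hCmem e hCe).2 with h | h
        · obtain ⟨h', hCh', hh'b, hh'col⟩ := (hcl e hCe).1 h
          exact absurd hh'b (hby h' (hCmem h' hCh').1 (hh'col.trans hey))
        · rw [(hψ'C e hCe).2 h]; exact fun hh => hab hh
      · rw [hψ'nC e hCe]; exact hby e he hey
    -- now extend with color b at (x,y)
    refine ⟨Function.update ψ' (x, y) b, ?_, ?_⟩
    · intro e he f hf hne hadj
      rcases Finset.mem_insert.mp he with rfl | he'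
      · rcases Finset.mem_insert.mp hf with rfl | hf'
        · exact absurd rfl hne
        · rw [Function.update_self, Function.update_of_ne (by rintro rfl; exact he₀ hf')]
          rcases hadj with h1 | h2
          · exact fun hc => hbx' f hf' h1.symm hc.symm
          · exact fun hc => hby' f hf' h2.symm hc.symm
      · rcases Finset.mem_insert.mp hf with rfl | hf'
        · rw [Function.update_self, Function.update_of_ne (by rintro rfl; exact he₀ he')]
          rcases hadj with h1 | h2
          · exact fun hc => hbx' e he' h1 hc
          · exact fun hc => hby' e he' h2 hc
        · rw [Function.update_of_ne (by rintro rfl; exact he₀ he'),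
            Function.update_of_ne (by rintro rfl; exact he₀ hf')]
          exact hprop' e he' f hf' hne hadj
    · intro e he
      rcases Finset.mem_insert.mp he with rfl | he'
      · rw [Function.update_self]; exact hb
      · rw [Function.update_of_ne (by rintro rfl; exact he₀ he')]; exact hlt' e he'


/-- König's edge coloring theorem (matrix form): a bipartite graph with degrees ≤ n
has a proper edge coloring with n colors. -/
theorem konig (n : ℕ) (A : Finset (α × β))
    (hrow : ∀ x : α, (A.filter (fun e => e.1 = x)).card ≤ n)
    (hcol : ∀ y : β, (A.filter (fun e => e.2 = y)).card ≤ n) :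
    ∃ ψ : α × β → ℕ, ProperOn A ψ ∧ ∀ e ∈ A, ψ e < n := by
  induction A using Finset.strongInduction with
  | _ A ih =>
    rcases A.eq_empty_or_nonempty with rfl | ⟨e₀, he₀⟩
    · exact ⟨fun _ => 0, fun e he => absurd he (Finset.notMem_empty e), fun e he => absurd he (Finset.notMem_empty e)⟩
    · obtain ⟨x, y⟩ := e₀
      set A' := A.erase (x, y) with hA'
      have hsub : A' ⊂ A := Finset.erase_ssubset he₀
      obtain ⟨ψ, hprop, hlt⟩ := ih A' hsub
        (fun z => le_trans (Finset.card_le_card (Finset.filter_subset_filter _ hsub.subset)) (hrow z))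
        (fun z => le_trans (Finset.card_le_card (Finset.filter_subset_filter _ hsub.subset)) (hcol z))
      -- find a free color a in row x and a free color b in column y
      have hmissing : ∀ (B : Finset (α × β)), B.card < n → ∃ m < n, ∀ e ∈ B, e ∈ A' → ψ e ≠ m := by
        intro B hB
        have himg : ((B.filter (· ∈ A')).image ψ).card < n := by
          calc ((B.filter (· ∈ A')).image ψ).card ≤ (B.filter (· ∈ A')).card :=
                Finset.card_image_le
            _ ≤ B.card := Finset.card_le_card (Finset.filter_subset _ _)
            _ < n := hB
        obtain ⟨m, hm1, hm2⟩ : ∃ m ∈ Finset.range n, m ∉ (B.filter (· ∈ A')).image ψ := by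
          by_contra hcon
          push_neg at hcon
          have := Finset.card_le_card (fun m hm => hcon m hm)
          rw [Finset.card_range] at this
          omega
        refine ⟨m, Finset.mem_range.mp hm1, ?_⟩
        intro e heB heA' hcon
        exact hm2 (Finset.mem_image.mpr ⟨e, Finset.mem_filter.mpr ⟨heB, heA'⟩, hcon⟩)
      have hrowcard : (A'.filter (fun e => e.1 = x)).card < n := by
        have h1 : A'.filter (fun e => e.1 = x) ⊆ (A.filter (fun e => e.1 = x)).erase (x, y) := by
          intro e he
          simp only [Finset.mem_filter, Finset.mem_erase, A'] at he ⊢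
          tauto
        have h2 : ((A.filter (fun e => e.1 = x)).erase (x, y)).card <
            (A.filter (fun e => e.1 = x)).card :=
          Finset.card_erase_lt_of_mem (Finset.mem_filter.mpr ⟨he₀, rfl⟩)
        exact lt_of_le_of_lt (Finset.card_le_card h1) (lt_of_lt_of_le h2 (hrow x))
      have hcolcard : (A'.filter (fun e => e.2 = y)).card < n := by
        have h1 : A'.filter (fun e => e.2 = y) ⊆ (A.filter (fun e => e.2 = y)).erase (x, y) := by
          intro e he
          simp only [Finset.mem_filter, Finset.mem_erase, A'] at he ⊢
          tauto
        have h2 : ((A.filter (fun e => e.2 = y)).erase (x, y)).card <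
            (A.filter (fun e => e.2 = y)).card :=
          Finset.card_erase_lt_of_mem (Finset.mem_filter.mpr ⟨he₀, rfl⟩)
        exact lt_of_le_of_lt (Finset.card_le_card h1) (lt_of_lt_of_le h2 (hcol y))
      obtain ⟨a, han, ha⟩ := hmissing (A'.filter (fun e => e.1 = x)) hrowcard
      obtain ⟨b, hbn, hbcolfree⟩ := hmissing (A'.filter (fun e => e.2 = y)) hcolcard
      have hax : ∀ e ∈ A', e.1 = x → ψ e ≠ a := fun e he hex =>
        ha e (Finset.mem_filter.mpr ⟨he, hex⟩) he
      have hby : ∀ e ∈ A', e.2 = y → ψ e ≠ b := fun e he hey =>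
        hbcolfree e (Finset.mem_filter.mpr ⟨he, hey⟩) he
      obtain ⟨ψ₂, hp2, hl2⟩ := konig_extend x y hprop hlt (Finset.notMem_erase _ _) han hbn hax hby
      rw [Finset.insert_erase he₀] at hp2 hl2
      exact ⟨ψ₂, hp2, hl2⟩

/-- Galvin's kernel lemma for the line graph of a bipartite graph, oriented by a
proper coloring ψ: every subset has a kernel. -/
theorem kernel_exists (ψ : α × β → ℕ) (A : Finset (α × β)) (hprop : ProperOn A ψ) :
    ∃ K : Finset (α × β), K ⊆ A ∧
      (∀ e ∈ K, ∀ f ∈ K, e ≠ f → ¬ Adj2 e f) ∧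
      (∀ e ∈ A, e ∉ K → ∃ k ∈ K, (k.1 = e.1 ∧ ψ k < ψ e) ∨ (k.2 = e.2 ∧ ψ e < ψ k)) := by
  induction A using Finset.strongInduction with
  | _ A ih =>
    -- the set of row-minimal edges
    set M := A.filter (fun e => ∀ f ∈ A, f.1 = e.1 → ψ e ≤ ψ f) with hM
    by_cases hmatch : ∀ e ∈ M, ∀ f ∈ M, e ≠ f → ¬ Adj2 e f
    · refine ⟨M, Finset.filter_subset _ _, hmatch, ?_⟩
      intro e heA heM
      -- e is not row-minimal, so the row-minimum absorbs it
      have hrow : (A.filter (fun f => f.1 = e.1)).Nonempty := ⟨e, Finset.mem_filter.mpr ⟨heA, rfl⟩⟩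
      obtain ⟨k, hk, hkmin⟩ := Finset.exists_min_image _ ψ hrow
      rw [Finset.mem_filter] at hk
      have hkM : k ∈ M := by
        rw [hM, Finset.mem_filter]
        exact ⟨hk.1, fun f hf hf1 => hkmin f (Finset.mem_filter.mpr ⟨hf, hf1.trans hk.2⟩)⟩
      have hke : k ≠ e := fun h => heM (h ▸ hkM)
      have hlt : ψ k < ψ e := by
        have hle : ψ k ≤ ψ e := hkmin e (Finset.mem_filter.mpr ⟨heA, rfl⟩)
        rcases lt_or_eq_of_le hle with h | h
        · exact h
        · exact absurd (row_inj hprop hk.1 heA hk.2 h) hke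
      exact ⟨k, hkM, Or.inl ⟨hk.2, hlt⟩⟩
    · -- two row-minimal edges share a column: reject the worse one for that column
      push_neg at hmatch
      obtain ⟨e₁, he₁, f₁, hf₁, hne₁, hadj₁⟩ := hmatch
      have he₁A : e₁ ∈ A := (Finset.mem_filter.mp he₁).1
      have hf₁A : f₁ ∈ A := (Finset.mem_filter.mp hf₁).1
      have hrowne : e₁.1 ≠ f₁.1 := by
        intro h
        have h1 : ψ e₁ ≤ ψ f₁ := (Finset.mem_filter.mp he₁).2 f₁ hf₁A h.symm
        have h2 : ψ f₁ ≤ ψ e₁ := (Finset.mem_filter.mp hf₁).2 e₁ he₁A h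
        exact hne₁ (row_inj hprop he₁A hf₁A h (le_antisymm h1 h2))
      have hcoleq : e₁.2 = f₁.2 := hadj₁.resolve_left hrowne
      have hpsine : ψ e₁ ≠ ψ f₁ := fun h => hne₁ (col_inj hprop he₁A hf₁A hcoleq h)
      -- wlog ψ f₁ < ψ e₁ (else swap names)
      obtain ⟨e₀, f₀, he₀A, hf₀A, he₀M, hcol₀, hlt₀⟩ :
          ∃ e₀ f₀, e₀ ∈ A ∧ f₀ ∈ A ∧ (∀ f ∈ A, f.1 = e₀.1 → ψ e₀ ≤ ψ f) ∧
            f₀.2 = e₀.2 ∧ ψ f₀ < ψ e₀ := by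
        rcases lt_or_gt_of_ne hpsine with h | h
        · exact ⟨f₁, e₁, hf₁A, he₁A, (Finset.mem_filter.mp hf₁).2, hcoleq, h⟩
        · exact ⟨e₁, f₁, he₁A, hf₁A, (Finset.mem_filter.mp he₁).2, hcoleq.symm, h⟩
      set B := A.filter (fun g => g.2 = e₀.2 ∧ ψ g < ψ e₀) with hB
      have hf₀B : f₀ ∈ B := Finset.mem_filter.mpr ⟨hf₀A, hcol₀, hlt₀⟩
      have hssub : A \ B ⊂ A := by
        refine Finset.sdiff_ssubset ?_ ?_
        · exact Finset.filter_subset _ _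
        · exact ⟨f₀, hf₀B⟩
      have hpropsub : ProperOn (A \ B) ψ := fun e he f hf =>
        hprop e (Finset.mem_sdiff.mp he).1 f (Finset.mem_sdiff.mp hf).1
      obtain ⟨K, hKsub, hKind, hKabs⟩ := ih (A \ B) hssub hpropsub
      have hKsubA : K ⊆ A := hKsub.trans (Finset.sdiff_subset)
      refine ⟨K, hKsubA, hKind, ?_⟩
      intro e heA heK
      by_cases heB : e ∈ B
      · -- e is rejected; e₀ or its absorber absorbs it
        rw [hB, Finset.mem_filter] at heB
        obtain ⟨-, hecol, helt⟩ := heB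
        have he₀notB : e₀ ∉ B := by
          rw [hB, Finset.mem_filter]
          rintro ⟨-, -, h⟩
          exact lt_irrefl _ h
        have he₀sd : e₀ ∈ A \ B := Finset.mem_sdiff.mpr ⟨he₀A, he₀notB⟩
        by_cases he₀K : e₀ ∈ K
        · exact ⟨e₀, he₀K, Or.inr ⟨hecol.symm, helt⟩⟩
        · obtain ⟨k, hkK, hkabs⟩ := hKabs e₀ he₀sd he₀K
          rcases hkabs with ⟨hk1, hk2⟩ | ⟨hk1, hk2⟩
          · exact absurd hk2 (not_lt.mpr (he₀M k (hKsubA hkK) hk1))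
          · exact ⟨k, hkK, Or.inr ⟨hk1.trans hecol.symm, helt.trans hk2⟩⟩
      · obtain ⟨k, hkK, hkabs⟩ := hKabs e (Finset.mem_sdiff.mpr ⟨heA, heB⟩) heK
        exact ⟨k, hkK, hkabs⟩


/-- Outdegree of an edge in the Galvin orientation. -/
noncomputable def outdeg (ψ : α × β → ℕ) (A : Finset (α × β)) (e : α × β) : ℕ :=
  (A.filter (fun f => (f.1 = e.1 ∧ ψ f < ψ e) ∨ (f.2 = e.2 ∧ ψ e < ψ f))).card

/-- Outdegree bound from a proper coloring with colors `< n`. -/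
theorem outdeg_lt (ψ : α × β → ℕ) (A : Finset (α × β)) (hprop : ProperOn A ψ) (n : ℕ)
    (hlt : ∀ e ∈ A, ψ e < n) (e : α × β) (he : e ∈ A) : outdeg ψ A e < n := by
  have hψe : ψ e < n := hlt e he
  have hrowA : (A.filter (fun f => f.1 = e.1 ∧ ψ f < ψ e)).card ≤ ψ e := by
    have h := Finset.card_le_card_of_injOn ψ
      (s := A.filter (fun f => f.1 = e.1 ∧ ψ f < ψ e))
      (t := Finset.range (ψ e)) ?_ ?_
    · rwa [Finset.card_range] at h
    · intro g hg
      rw [Finset.mem_coe, Finset.mem_filter] at hg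
      exact Finset.mem_range.mpr hg.2.2
    · intro g hg g' hg' h2
      rw [Finset.coe_filter] at hg hg'
      by_contra hne
      exact hprop g hg.1 g' hg'.1 hne (Or.inl (hg.2.1.trans hg'.2.1.symm)) h2
  have hcolA : (A.filter (fun f => f.2 = e.2 ∧ ψ e < ψ f)).card ≤ n - ψ e - 1 := by
    have h := Finset.card_le_card_of_injOn ψ
      (s := A.filter (fun f => f.2 = e.2 ∧ ψ e < ψ f))
      (t := Finset.Ico (ψ e + 1) n) ?_ ?_
    · rwa [Nat.card_Ico] at h
    · intro g hg
      rw [Finset.mem_coe, Finset.mem_filter] at hg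
      exact Finset.mem_Ico.mpr ⟨hg.2.2, hlt g hg.1⟩
    · intro g hg g' hg' h2
      rw [Finset.coe_filter] at hg hg'
      by_contra hne
      exact hprop g hg.1 g' hg'.1 hne (Or.inr (hg.2.1.trans hg'.2.1.symm)) h2
  have hsplit : outdeg ψ A e ≤
      (A.filter (fun f => f.1 = e.1 ∧ ψ f < ψ e)).card +
      (A.filter (fun f => f.2 = e.2 ∧ ψ e < ψ f)).card := by
    refine le_trans (Finset.card_le_card ?_) (Finset.card_union_le _ _)
    intro g hg
    simp only [Finset.mem_filter, Finset.mem_union] at hg ⊢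
    tauto
  omega

/-- List edge coloring via kernels (Bondy–Boppana–Galvin induction). -/
theorem list_coloring (ψ : α × β → ℕ) (A : Finset (α × β)) :
    ∀ (L : α × β → Finset ℕ), ProperOn A ψ → (∀ e ∈ A, outdeg ψ A e < (L e).card) →
    ∃ σ : α × β → ℕ, (∀ e ∈ A, σ e ∈ L e) ∧ ProperOn A σ := by
  induction A using Finset.strongInduction with
  | _ A ih =>
    intro L hprop hL
    rcases A.eq_empty_or_nonempty with rfl | ⟨estar, hestar⟩
    · exact ⟨fun _ => 0, fun e he => absurd he (Finset.notMem_empty e),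
        fun e he => absurd he (Finset.notMem_empty e)⟩
    · have hLne : (L estar).Nonempty := Finset.card_pos.mp (lt_of_le_of_lt (Nat.zero_le _) (hL estar hestar))
      obtain ⟨γ, hγ⟩ := hLne
      set Aγ := A.filter (fun e => γ ∈ L e) with hAγ
      have hAγsub : Aγ ⊆ A := Finset.filter_subset _ _
      have hpropγ : ProperOn Aγ ψ := fun e he f hf => hprop e (hAγsub he) f (hAγsub hf)
      obtain ⟨K, hKsub, hKind, hKabs⟩ := kernel_exists ψ Aγ hpropγ
      have hKsubA : K ⊆ A := hKsub.trans hAγsub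
      have hKne : K.Nonempty := by
        by_contra hcon
        rw [Finset.not_nonempty_iff_eq_empty] at hcon
        have hestarγ : estar ∈ Aγ := Finset.mem_filter.mpr ⟨hestar, hγ⟩
        obtain ⟨k, hk, -⟩ := hKabs estar hestarγ (by rw [hcon]; exact Finset.notMem_empty _)
        rw [hcon] at hk
        exact Finset.notMem_empty k hk
      set A'' := A \ K with hA''
      have hssub : A'' ⊂ A := by
        obtain ⟨k, hk⟩ := hKne
        exact Finset.sdiff_ssubset hKsubA ⟨k, hk⟩
      set L' : α × β → Finset ℕ := fun e => if γ ∈ L e then (L e).erase γ else L e with hL'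
      have hprop'' : ProperOn A'' ψ := fun e he f hf =>
        hprop e (Finset.mem_sdiff.mp he).1 f (Finset.mem_sdiff.mp hf).1
      have hL'' : ∀ e ∈ A'', outdeg ψ A'' e < (L' e).card := by
        intro e he
        rw [Finset.mem_sdiff] at he
        obtain ⟨heA, heK⟩ := he
        by_cases heγ : γ ∈ L e
        · -- e lost the color γ, but also an out-neighbor (its absorber in K)
          obtain ⟨k, hkK, hkabs⟩ := hKabs e (Finset.mem_filter.mpr ⟨heA, heγ⟩) heK
          have hkout : k ∈ A.filter (fun f => (f.1 = e.1 ∧ ψ f < ψ e) ∨ (f.2 = e.2 ∧ ψ e < ψ f)) :=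
            Finset.mem_filter.mpr ⟨hKsubA hkK, hkabs⟩
          have hsub2 : A''.filter (fun f => (f.1 = e.1 ∧ ψ f < ψ e) ∨ (f.2 = e.2 ∧ ψ e < ψ f)) ⊆
              (A.filter (fun f => (f.1 = e.1 ∧ ψ f < ψ e) ∨ (f.2 = e.2 ∧ ψ e < ψ f))).erase k := by
            intro f hf
            rw [Finset.mem_filter] at hf
            rw [Finset.mem_erase]
            refine ⟨?_, Finset.mem_filter.mpr ⟨(Finset.mem_sdiff.mp hf.1).1, hf.2⟩⟩
            rintro rfl
            exact (Finset.mem_sdiff.mp hf.1).2 hkK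
          have h1 : outdeg ψ A'' e ≤ outdeg ψ A e - 1 := by
            calc outdeg ψ A'' e ≤ ((A.filter _).erase k).card := Finset.card_le_card hsub2
              _ = outdeg ψ A e - 1 := Finset.card_erase_of_mem hkout
          have h2 : (L' e).card = (L e).card - 1 := by
            rw [hL']
            simp only [if_pos heγ]
            exact Finset.card_erase_of_mem heγ
          have h3 : 1 ≤ outdeg ψ A e := by
            rw [outdeg, Finset.card_pos.symm] at *
            exact Finset.card_pos.mpr ⟨k, hkout⟩
          have := hL e heA
          omega
        · have hsub2 : A''.filter (fun f => (f.1 = e.1 ∧ ψ f < ψ e) ∨ (f.2 = e.2 ∧ ψ e < ψ f)) ⊆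
              A.filter (fun f => (f.1 = e.1 ∧ ψ f < ψ e) ∨ (f.2 = e.2 ∧ ψ e < ψ f)) :=
            Finset.filter_subset_filter _ Finset.sdiff_subset
          have h2 : L' e = L e := by rw [hL']; simp only [if_neg heγ]
          rw [h2]
          exact lt_of_le_of_lt (Finset.card_le_card hsub2) (hL e heA)
      obtain ⟨σ, hσmem, hσprop⟩ := ih A'' hssub L' hprop'' hL''
      refine ⟨fun e => if e ∈ K then γ else σ e, ?_, ?_⟩
      · intro e he
        by_cases heK : e ∈ K
        · simp only [if_pos heK]
          exact (Finset.mem_filter.mp (hKsub heK)).2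
        · simp only [if_neg heK]
          have he'' : e ∈ A'' := Finset.mem_sdiff.mpr ⟨he, heK⟩
          have := hσmem e he''
          by_cases heγ : γ ∈ L e
          · rw [hL'] at this; simp only [if_pos heγ] at this
            exact Finset.mem_of_mem_erase this
          · rw [hL'] at this; simp only [if_neg heγ] at this
            exact this
      · intro e he f hf hne hadj
        by_cases heK : e ∈ K <;> by_cases hfK : f ∈ K
        · exact absurd hadj (hKind e heK f hfK hne)
        · simp only [if_pos heK, if_neg hfK]
          have hf'' : f ∈ A'' := Finset.mem_sdiff.mpr ⟨hf, hfK⟩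
          have hmem := hσmem f hf''
          intro hc
          by_cases hfγ : γ ∈ L f
          · rw [hL'] at hmem; simp only [if_pos hfγ] at hmem
            exact Finset.notMem_erase γ (L f) (hc ▸ hmem)
          · rw [hL'] at hmem; simp only [if_neg hfγ] at hmem
            exact hfγ (hc ▸ hmem)
        · simp only [if_neg heK, if_pos hfK]
          have he'' : e ∈ A'' := Finset.mem_sdiff.mpr ⟨he, heK⟩
          have hmem := hσmem e he''
          intro hc
          by_cases heγ : γ ∈ L e
          · rw [hL'] at hmem; simp only [if_pos heγ] at hmem
            exact Finset.notMem_erase γ (L e) (hc ▸ hmem)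
          · rw [hL'] at hmem; simp only [if_neg heγ] at hmem
            exact heγ (hc ▸ hmem)
        · simp only [if_neg heK, if_neg hfK]
          exact hσprop e (Finset.mem_sdiff.mpr ⟨he, heK⟩) f (Finset.mem_sdiff.mpr ⟨hf, hfK⟩) hne hadj

end EPE


/-- A precolored distance-2 matching in a bipartite graph `G` with at most `Δ(G)+1` colors
extends to a proper edge coloring with `Δ(G)+1` colors. -/
theorem stmt_13 {V : Type*} [Fintype V] (G : SimpleGraph V) [DecidableRel G.Adj]
    (hbip : G.Colorable 2)
    (F : Set (Sym2 V)) (hF : F ⊆ G.edgeSet)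
    (c : Sym2 V → Fin (G.maxDegree + 1))
    (hdist : ∀ e ∈ F, ∀ f ∈ F, e ≠ f → Dist2Apart G e f) :
    ∃ C : Sym2 V → Fin (G.maxDegree + 1),
      IsProperEdgeColoring G C ∧ ∀ e ∈ F, C e = c e := by
  classical
  obtain ⟨col⟩ := hbip
  set A : Finset (V × V) := Finset.univ.filter
    (fun p => G.Adj p.1 p.2 ∧ s(p.1, p.2) ∉ F ∧ col p.1 = 0 ∧ col p.2 = 1) with hA
  have hAmem : ∀ p ∈ A, G.Adj p.1 p.2 ∧ s(p.1, p.2) ∉ F ∧ col p.1 = 0 ∧ col p.2 = 1 :=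
    fun p hp => (Finset.mem_filter.mp hp).2
  -- degree bounds
  have hrowdeg : ∀ x : V, (A.filter (fun e => e.1 = x)).card ≤ G.maxDegree := by
    intro x
    have h1 : (A.filter (fun e => e.1 = x)).card ≤ (G.neighborFinset x).card := by
      apply Finset.card_le_card_of_injOn (fun e => e.2)
      · intro e he
        rw [Finset.mem_coe, Finset.mem_filter] at he
        rw [Finset.mem_coe, SimpleGraph.mem_neighborFinset]
        exact he.2 ▸ (hAmem e he.1).1
      · intro e he f hf h2
        rw [Finset.coe_filter] at he hf
        exact Prod.ext (he.2.trans hf.2.symm) h2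
    calc (A.filter (fun e => e.1 = x)).card ≤ (G.neighborFinset x).card := h1
      _ = G.degree x := (G.card_neighborFinset_eq_degree x)
      _ ≤ G.maxDegree := G.degree_le_maxDegree x
  have hcoldeg : ∀ y : V, (A.filter (fun e => e.2 = y)).card ≤ G.maxDegree := by
    intro y
    have h1 : (A.filter (fun e => e.2 = y)).card ≤ (G.neighborFinset y).card := by
      apply Finset.card_le_card_of_injOn (fun e => e.1)
      · intro e he
        rw [Finset.mem_coe, Finset.mem_filter] at he
        rw [Finset.mem_coe, SimpleGraph.mem_neighborFinset]
        exact (he.2 ▸ (hAmem e he.1).1).symm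
      · intro e he f hf h2
        rw [Finset.coe_filter] at he hf
        exact Prod.ext h2 (he.2.trans hf.2.symm)
    calc (A.filter (fun e => e.2 = y)).card ≤ (G.neighborFinset y).card := h1
      _ = G.degree y := (G.card_neighborFinset_eq_degree y)
      _ ≤ G.maxDegree := G.degree_le_maxDegree y
  obtain ⟨ψ, hψprop, hψlt⟩ := EPE.konig G.maxDegree A hrowdeg hcoldeg
  -- lists
  set L : V × V → Finset ℕ := fun p => (Finset.range (G.maxDegree + 1)).filter
    (fun i => ∀ f ∈ F, EdgesAdj f s(p.1, p.2) → (c f).val ≠ i) with hL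
  -- at most one precolored edge is adjacent to any edge of A
  have hFadj : ∀ p ∈ A, ∀ f ∈ F, ∀ g ∈ F, EdgesAdj f s(p.1, p.2) →
      EdgesAdj g s(p.1, p.2) → f = g := by
    intro p hp f hf g hg ⟨w1, hw1f, hw1p⟩ ⟨w2, hw2g, hw2p⟩
    by_contra hne
    have hd := hdist f hf g hg hne
    have hadj := (hAmem p hp).1
    rw [Sym2.mem_iff] at hw1p hw2p
    rcases hw1p with rfl | rfl <;> rcases hw2p with rfl | rfl
    · exact (hd _ hw1f _ hw2g).1 rfl
    · exact (hd _ hw1f _ hw2g).2 hadj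
    · exact (hd _ hw1f _ hw2g).2 hadj.symm
    · exact (hd _ hw1f _ hw2g).1 rfl
  have hLcard : ∀ p ∈ A, G.maxDegree ≤ (L p).card := by
    intro p hp
    by_cases hex : ∃ f ∈ F, EdgesAdj f s(p.1, p.2)
    · obtain ⟨f, hf, hfadj⟩ := hex
      have hsub : (Finset.range (G.maxDegree + 1)).erase ((c f).val) ⊆ L p := by
        intro i hi
        rw [Finset.mem_erase] at hi
        rw [hL]
        refine Finset.mem_filter.mpr ⟨hi.2, ?_⟩
        intro g hg hgadj
        rw [hFadj p hp g hg f hf hgadj hfadj]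
        exact fun h => hi.1 h.symm
      have h5 : (Finset.range (G.maxDegree + 1)).card - 1 ≤
          ((Finset.range (G.maxDegree + 1)).erase ((c f).val)).card :=
        Finset.pred_card_le_card_erase
      have h6 := Finset.card_le_card hsub
      rw [Finset.card_range] at h5
      omega
    · push_neg at hex
      have hsub : Finset.range (G.maxDegree + 1) ⊆ L p := by
        intro i hi
        rw [hL]
        exact Finset.mem_filter.mpr ⟨hi, fun g hg hgadj => absurd hgadj (hex g hg)⟩
      calc G.maxDegree ≤ G.maxDegree + 1 := Nat.le_succ G.maxDegree
        _ = (Finset.range (G.maxDegree + 1)).card := (Finset.card_range _).symm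
        _ ≤ (L p).card := Finset.card_le_card hsub
  -- outdegree bound
  have houtdeg : ∀ p ∈ A, EPE.outdeg ψ A p < (L p).card := by
    intro p hp
    exact lt_of_lt_of_le (EPE.outdeg_lt ψ A hψprop G.maxDegree hψlt p hp) (hLcard p hp)
  obtain ⟨σ, hσmem, hσprop⟩ := EPE.list_coloring ψ A L hψprop houtdeg
  have hσlt : ∀ p ∈ A, σ p < G.maxDegree + 1 := by
    intro p hp
    have := hσmem p hp
    rw [hL] at this
    exact Finset.mem_range.mp (Finset.mem_filter.mp this).1
  -- uniqueness and existence of representatives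
  have huniq : ∀ p ∈ A, ∀ q ∈ A, s(p.1, p.2) = s(q.1, q.2) → p = q := by
    intro p hp q hq hs
    rw [Sym2.eq_iff] at hs
    rcases hs with ⟨h1, h2⟩ | ⟨h1, h2⟩
    · exact Prod.ext h1 h2
    · exfalso
      have h3 := (hAmem p hp).2.2.1
      have h4 := (hAmem q hq).2.2.2
      rw [h1] at h3
      rw [h4] at h3
      exact absurd h3 (by decide)
  have hex : ∀ s ∈ G.edgeSet, s ∉ F → ∃ p, p ∈ A ∧ s(p.1, p.2) = s := by
    intro s hs hsF
    induction s using Sym2.ind with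
    | _ u v =>
      rw [SimpleGraph.mem_edgeSet] at hs
      have hcol := col.valid hs
      have h2 : ∀ i : Fin 2, i = 0 ∨ i = 1 := by decide
      rcases h2 (col u) with hu | hu <;> rcases h2 (col v) with hv | hv
      · exact absurd (hu.trans hv.symm) hcol
      · exact ⟨(u, v), Finset.mem_filter.mpr ⟨Finset.mem_univ _, hs, hsF, hu, hv⟩, rfl⟩
      · refine ⟨(v, u), Finset.mem_filter.mpr ⟨Finset.mem_univ _, hs.symm, ?_, hv, hu⟩, Sym2.eq_swap⟩
        rw [Sym2.eq_swap]
        exact hsF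
      · exact absurd (hu.trans hv.symm) hcol
  -- the final coloring
  refine ⟨fun s => if hs : s ∈ F then c s else
    (if h : ∃ p, p ∈ A ∧ s(p.1, p.2) = s then ⟨σ h.choose, hσlt _ h.choose_spec.1⟩ else c s),
    ?_, ?_⟩
  · intro e he f hf hne hadj
    by_cases heF : e ∈ F <;> by_cases hfF : f ∈ F
    · obtain ⟨v, hv1, hv2⟩ := hadj
      exact absurd ((hdist e heF f hfF hne v hv1 v hv2).1 rfl) (fun h => h)
    · have hexf : ∃ p, p ∈ A ∧ s(p.1, p.2) = f := hex f hf hfF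
      simp only [dif_pos heF, dif_neg hfF, dif_pos hexf]
      obtain ⟨hpA, hps⟩ := hexf.choose_spec
      have hmem := hσmem _ hpA
      rw [hL, Finset.mem_filter] at hmem
      have := hmem.2 e heF (by rw [hps]; exact hadj)
      intro hcon
      exact this (congrArg Fin.val hcon)
    · have hexe : ∃ p, p ∈ A ∧ s(p.1, p.2) = e := hex e he heF
      simp only [dif_pos hfF, dif_neg heF, dif_pos hexe]
      obtain ⟨hpA, hps⟩ := hexe.choose_spec
      have hmem := hσmem _ hpA
      rw [hL, Finset.mem_filter] at hmem
      obtain ⟨v, hv1, hv2⟩ := hadj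
      have := hmem.2 f hfF (by rw [hps]; exact ⟨v, hv2, hv1⟩)
      intro hcon
      exact this (congrArg Fin.val hcon).symm
    · have hexe : ∃ p, p ∈ A ∧ s(p.1, p.2) = e := hex e he heF
      have hexf : ∃ p, p ∈ A ∧ s(p.1, p.2) = f := hex f hf hfF
      simp only [dif_neg heF, dif_neg hfF, dif_pos hexe, dif_pos hexf]
      obtain ⟨hpA, hps⟩ := hexe.choose_spec
      obtain ⟨hqA, hqs⟩ := hexf.choose_spec
      have hpq : hexe.choose ≠ hexf.choose := by
        intro h
        rw [← hps, ← hqs, h] at hne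
        exact hne rfl
      have hadj2 : EPE.Adj2 hexe.choose hexf.choose := by
        obtain ⟨v, hv1, hv2⟩ := hadj
        rw [← hps, Sym2.mem_iff] at hv1
        rw [← hqs, Sym2.mem_iff] at hv2
        have hp0 := (hAmem _ hpA).2.2
        have hq0 := (hAmem _ hqA).2.2
        rcases hv1 with h1 | h1 <;> rcases hv2 with h2 | h2
        · exact Or.inl (h1.symm.trans h2)
        · exfalso
          have h3 : col hexf.choose.2 = 0 := by rw [← h2, h1]; exact hp0.1
          exact absurd (hq0.2.symm.trans h3) (by decide)
        · exfalso
          have h3 : col hexf.choose.1 = 1 := by rw [← h2, h1]; exact hp0.2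
          exact absurd (hq0.1.symm.trans h3) (by decide)
        · exact Or.inr (h1.symm.trans h2)
      have := hσprop _ hpA _ hqA hpq hadj2
      intro hcon
      exact this (congrArg Fin.val hcon)
  · intro e heF
    simp only [dif_pos heF]
end

section
/- Let G be a graph, a ∈ V(G) a vertex of maximum degree Δ(G □ H) in G □ H together with b ∈ V(H) of maximum degree in H, and suppose there exist induced matchings M_G in G covering N_G(a) with a not an endpoint, and M_H in H covering N_H(b) with b not an endpoint. Then the set of edges {(c,b)(d,b) : cd ∈ M_G} ∪ {(a,k)(a,m) : km ∈ M_H} is an induced matching in G □ H, and every edge of G □ H incident to (a,b) is adjacent to some edge of this set. -/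
open SimpleGraph

/-- The blocking construction: lifting an induced matching covering `N_G(a)` into the
`G`-layer at `b` and one covering `N_H(b)` into the `H`-layer at `a` gives an induced
matching of `G □ H` meeting every edge incident to `(a,b)`. -/
theorem stmt_15 {V W : Type*} [Fintype V] [Fintype W]
    (G : SimpleGraph V) (H : SimpleGraph W)
    [DecidableRel G.Adj] [DecidableRel H.Adj] [DecidableRel (G.boxProd H).Adj]
    (a : V) (b : W)
    (hab : (G.boxProd H).degree (a, b) = (G.boxProd H).maxDegree)
    (hbmax : H.degree b = H.maxDegree)
    (MG : Set (Sym2 V)) (MH : Set (Sym2 W))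
    (hMG : IsInducedMatching G MG) (hMH : IsInducedMatching H MH)
    (haMG : ∀ e ∈ MG, a ∉ e) (hbMH : ∀ e ∈ MH, b ∉ e)
    (hcovG : ∀ w ∈ G.neighborSet a, ∃ e ∈ MG, w ∈ e)
    (hcovH : ∀ w ∈ H.neighborSet b, ∃ e ∈ MH, w ∈ e) :
    IsInducedMatching (G.boxProd H)
        ((Sym2.map (fun x => (x, b)) '' MG) ∪ (Sym2.map (fun y => (a, y)) '' MH)) ∧
      ∀ e ∈ (G.boxProd H).edgeSet, (a, b) ∈ e →
        ∃ f ∈ (Sym2.map (fun x => (x, b)) '' MG) ∪ (Sym2.map (fun y => (a, y)) '' MH),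
          e ≠ f ∧ EdgesAdj e f := by
  obtain ⟨hMGe, hMGd⟩ := hMG
  obtain ⟨hMHe, hMHd⟩ := hMH
  constructor
  · constructor
    · rintro e' (⟨m, hm, rfl⟩ | ⟨m, hm, rfl⟩)
      · induction m using Sym2.ind with
        | _ x y =>
          have := hMGe hm
          simp only [SimpleGraph.mem_edgeSet] at this
          rw [Sym2.map_pair_eq, SimpleGraph.mem_edgeSet]
          exact SimpleGraph.boxProd_adj_left.mpr this
      · induction m using Sym2.ind with
        | _ x y =>
          have := hMHe hm
          simp only [SimpleGraph.mem_edgeSet] at this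
          rw [Sym2.map_pair_eq, SimpleGraph.mem_edgeSet]
          exact SimpleGraph.boxProd_adj_right.mpr this
    · rintro e' (⟨e, he, rfl⟩ | ⟨e, he, rfl⟩) f' (⟨f, hf, rfl⟩ | ⟨f, hf, rfl⟩) hne x hx y hy
      · obtain ⟨u, hu, rfl⟩ := Sym2.mem_map.mp hx
        obtain ⟨v, hv, rfl⟩ := Sym2.mem_map.mp hy
        have hef : e ≠ f := by rintro rfl; exact hne rfl
        obtain ⟨hne', hnadj⟩ := hMGd e he f hf hef u hu v hv
        refine ⟨fun h => hne' (Prod.ext_iff.mp h).1, ?_⟩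
        rw [SimpleGraph.boxProd_adj]
        rintro (⟨h1, -⟩ | ⟨h1, -⟩)
        · exact hnadj h1
        · exact H.loopless.irrefl b h1
      · obtain ⟨u, hu, rfl⟩ := Sym2.mem_map.mp hx
        obtain ⟨v, hv, rfl⟩ := Sym2.mem_map.mp hy
        have hua : u ≠ a := fun h => haMG e he (h ▸ hu)
        have hvb : v ≠ b := fun h => hbMH f hf (h ▸ hv)
        refine ⟨fun h => hua (Prod.ext_iff.mp h).1, ?_⟩
        rw [SimpleGraph.boxProd_adj]
        rintro (⟨-, h2⟩ | ⟨-, h2⟩)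
        · exact hvb h2.symm
        · exact hua h2
      · obtain ⟨u, hu, rfl⟩ := Sym2.mem_map.mp hx
        obtain ⟨v, hv, rfl⟩ := Sym2.mem_map.mp hy
        have hub : u ≠ b := fun h => hbMH e he (h ▸ hu)
        have hva : v ≠ a := fun h => haMG f hf (h ▸ hv)
        refine ⟨fun h => hva ((Prod.ext_iff.mp h).1).symm, ?_⟩
        rw [SimpleGraph.boxProd_adj]
        rintro (⟨-, h2⟩ | ⟨-, h2⟩)
        · exact hub h2
        · exact hva h2.symm
      · obtain ⟨u, hu, rfl⟩ := Sym2.mem_map.mp hx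
        obtain ⟨v, hv, rfl⟩ := Sym2.mem_map.mp hy
        have hef : e ≠ f := by rintro rfl; exact hne rfl
        obtain ⟨hne', hnadj⟩ := hMHd e he f hf hef u hu v hv
        refine ⟨fun h => hne' (Prod.ext_iff.mp h).2, ?_⟩
        rw [SimpleGraph.boxProd_adj]
        rintro (⟨h1, h2⟩ | ⟨h1, -⟩)
        · exact G.loopless.irrefl a h1
        · exact hnadj h1
  · intro e he hab'
    induction e using Sym2.ind with
    | _ p q =>
      rw [SimpleGraph.mem_edgeSet] at he
      have key : ∀ c : V × W, (G.boxProd H).Adj (a, b) c →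
          ∃ f ∈ (Sym2.map (fun x => (x, b)) '' MG) ∪ (Sym2.map (fun y => (a, y)) '' MH),
            s((a, b), c) ≠ f ∧ EdgesAdj s((a, b), c) f := by
        intro c hadj
        rw [SimpleGraph.boxProd_adj] at hadj
        rcases hadj with ⟨h1, h2⟩ | ⟨h1, h2⟩
        · obtain ⟨m, hm, hcm⟩ := hcovG c.1 h1
          refine ⟨Sym2.map (fun x => (x, b)) m, Or.inl ⟨m, hm, rfl⟩, ?_, ?_⟩
          · intro h
            have : (a, b) ∈ Sym2.map (fun x => (x, b)) m := h ▸ Sym2.mem_mk_left _ _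
            obtain ⟨u, hu, hue⟩ := Sym2.mem_map.mp this
            exact haMG m hm ((Prod.mk.injEq _ _ _ _ ▸ hue).1 ▸ hu)
          · refine ⟨c, Sym2.mem_mk_right _ _, ?_⟩
            have : c = (c.1, b) := Prod.ext_iff.mpr ⟨rfl, h2.symm⟩
            rw [this]
            exact Sym2.mem_map.mpr ⟨c.1, hcm, rfl⟩
        · obtain ⟨m, hm, hcm⟩ := hcovH c.2 h1
          refine ⟨Sym2.map (fun y => (a, y)) m, Or.inr ⟨m, hm, rfl⟩, ?_, ?_⟩
          · intro h
            have : (a, b) ∈ Sym2.map (fun y => (a, y)) m := h ▸ Sym2.mem_mk_left _ _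
            obtain ⟨u, hu, hue⟩ := Sym2.mem_map.mp this
            exact hbMH m hm ((Prod.mk.injEq _ _ _ _ ▸ hue).2 ▸ hu)
          · refine ⟨c, Sym2.mem_mk_right _ _, ?_⟩
            have : c = (a, c.2) := Prod.ext_iff.mpr ⟨h2.symm, rfl⟩
            rw [this]
            exact Sym2.mem_map.mpr ⟨c.2, hcm, rfl⟩
      rcases Sym2.mem_iff.mp hab' with h | h
      · exact h ▸ key q (h ▸ he)
      · rw [Sym2.eq_swap]
        exact h ▸ key p (h ▸ he.symm)
end

section
/- Let G be a graph, v a vertex with deg(v) = Δ(G), and F an induced matching in G, all of whose edges are adjacent to an edge incident to v but none incident to v itself, such that the endpoints of F cover N(v). If all edges of F are precolored with the same color, this precoloring cannot be extended to a proper edge coloring of G with Δ(G) colors. -/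
open SimpleGraph

/-- If `v` has maximum degree and the induced matching `F` avoids `v` but covers `N(v)`
(each edge of `F` being adjacent to an edge at `v`), then coloring all of `F` with one
color admits no extension to a proper `Δ(G)`-edge coloring. -/
theorem stmt_17 {V : Type*} [Fintype V] (G : SimpleGraph V) [DecidableRel G.Adj]
    (v : V) (hv : G.degree v = G.maxDegree)
    (F : Set (Sym2 V)) (hF : IsInducedMatching G F)
    (hadj : ∀ f ∈ F, ∃ e ∈ G.edgeSet, v ∈ e ∧ e ≠ f ∧ EdgesAdj e f)
    (hnotv : ∀ f ∈ F, v ∉ f)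
    (hcov : ∀ w ∈ G.neighborSet v, ∃ f ∈ F, w ∈ f)
    (c0 : Fin G.maxDegree) :
    ¬ ∃ C : Sym2 V → Fin G.maxDegree,
        IsProperEdgeColoring G C ∧ ∀ f ∈ F, C f = c0 := by
  rintro ⟨C, hC, hCF⟩
  have hdeg : (G.neighborFinset v).card = G.maxDegree := by
    rw [← hv]; exact G.card_neighborFinset_eq_degree v
  have hinj : Set.InjOn (fun w => C s(v, w)) (G.neighborFinset v) := by
    intro a ha b hb hab
    by_contra hne
    have haE : G.Adj v a := by simpa using ha
    have hbE : G.Adj v b := by simpa using hb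
    have hEne : s(v, a) ≠ s(v, b) := by
      intro h
      rcases (Sym2.eq_iff).mp h with ⟨_, h2⟩ | ⟨h1, h2⟩
      · exact hne h2
      · exact G.irrefl (h2 ▸ haE)
    exact hC s(v, a) haE s(v, b) hbE hEne ⟨v, by simp, by simp⟩ hab
  set S := (G.neighborFinset v).image (fun w => C s(v, w)) with hS
  have hcard : S.card = G.maxDegree := by
    rw [hS, Finset.card_image_of_injOn hinj, hdeg]
  have hSuniv : S = Finset.univ := Finset.eq_univ_of_card _ (by simp [hcard])
  have hc0 : c0 ∈ S := hSuniv ▸ Finset.mem_univ c0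
  obtain ⟨w, hw, hcw⟩ := Finset.mem_image.mp hc0
  have hadjvw : G.Adj v w := by simpa using hw
  obtain ⟨f, hfF, hwf⟩ := hcov w hadjvw
  have hfE : f ∈ G.edgeSet := hF.1 hfF
  have hne : s(v, w) ≠ f := by
    intro h; exact hnotv f hfF (h ▸ Sym2.mem_mk_left v w)
  exact hC s(v, w) hadjvw f hfE hne ⟨w, by simp, hwf⟩ (by rw [hcw, hCF f hfF])
end
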